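/- arXiv:2408.15074 — 5 statements merged into one kernel-verified Lean document; each statement's English description precedes it below -/
import Mathlib

section
/- The claw K_{1,3} is not strongly nice: the partition (2,2) is below (3,1) in dominance order, yet ã_{(2,2)}(K_{1,3}) = 0 < 1 = ã_{(3,1)}(K_{1,3}). -/
def IsStableSet {V : Type*} (G : SimpleGraph V) (S : Finset V) : Prop :=
  ∀ v ∈ S, ∀ w ∈ S, ¬ G.Adj v w

def SemiOrderedStable {V : Type*} (G : SimpleGraph V) (L : List ℕ)
    (B : Fin L.length → Finset V) : Prop :=
  (∀ i, IsStableSet G (B i)) ∧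
  (∀ i j, i ≠ j → Disjoint (B i) (B j)) ∧
  (∀ v : V, ∃ i, v ∈ B i) ∧
  (∀ i, (B i).card = L.get i)

noncomputable def aTilde {V : Type*} (G : SimpleGraph V) (L : List ℕ) : ℕ :=
  Nat.card {B : Fin L.length → Finset V // SemiOrderedStable G L B}

def IsPartitionOf (n : ℕ) (L : List ℕ) : Prop :=
  L.Pairwise (· ≥ ·) ∧ (∀ x ∈ L, 0 < x) ∧ L.sum = n

def DominatedBy (M L : List ℕ) : Prop :=
  ∀ k : ℕ, (M.take k).sum ≤ (L.take k).sum

def StronglyNice {V : Type*} [Fintype V] (G : SimpleGraph V) : Prop :=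
  ∀ L M : List ℕ, IsPartitionOf (Fintype.card V) L →
    IsPartitionOf (Fintype.card V) M → DominatedBy M L →
    aTilde G L ≤ aTilde G M

def HasStablePartitionOfType {V : Type*} (G : SimpleGraph V) (L : List ℕ) : Prop :=
  ∃ B : Fin L.length → Finset V, SemiOrderedStable G L B

def ClawFree {V : Type*} (G : SimpleGraph V) : Prop :=
  ¬ ∃ (c a b d : V), a ≠ b ∧ a ≠ d ∧ b ≠ d ∧
    G.Adj c a ∧ G.Adj c b ∧ G.Adj c d ∧ ¬ G.Adj a b ∧ ¬ G.Adj a d ∧ ¬ G.Adj b d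

/-- The claw `K_{1,3}` on `Fin 4`, with center `0` adjacent to the three leaves `1, 2, 3`. -/
def claw : SimpleGraph (Fin 4) := SimpleGraph.fromRel (fun a _ => a = 0)

lemma claw_adj {v w : Fin 4} : claw.Adj v w ↔ v ≠ w ∧ (v = 0 ∨ w = 0) := by
  simp [claw, SimpleGraph.fromRel_adj]

lemma big_block_no_zero {B : Finset (Fin 4)} (hst : IsStableSet claw B)
    (h0 : (0 : Fin 4) ∈ B) : B.card ≤ 1 := by
  by_contra h
  push_neg at h
  obtain ⟨w, hw, hwne⟩ : ∃ w ∈ B, w ≠ 0 := by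
    by_contra hc
    push_neg at hc
    have hsub : B ⊆ {0} := fun x hx => Finset.mem_singleton.mpr (hc x hx)
    have := Finset.card_le_card hsub
    simp at this
    omega
  exact hst 0 h0 w hw (claw_adj.mpr ⟨Ne.symm hwne, Or.inl rfl⟩)

lemma a22_zero : aTilde claw [2, 2] = 0 := by
  rw [aTilde, Nat.card_eq_zero]
  left
  constructor
  rintro ⟨B, hst, hdisj, hcov, hcard⟩
  obtain ⟨i, hi⟩ := hcov 0
  have hc : (B i).card = 2 := by
    have := hcard i
    fin_cases i <;> simpa using this
  have := big_block_no_zero (hst i) hi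
  omega

lemma a31_char (B : Fin 2 → Finset (Fin 4)) (h : SemiOrderedStable claw [3, 1] B) :
    B = ![({1, 2, 3} : Finset (Fin 4)), {0}] := by
  obtain ⟨hst, hdisj, hcov, hcard⟩ := h
  have hc0 : (B 0).card = 3 := hcard (0 : Fin 2)
  have hc1 : (B 1).card = 1 := hcard (1 : Fin 2)
  obtain ⟨i, hi⟩ := hcov 0
  have hi1 : (0 : Fin 4) ∈ B 1 := by
    fin_cases i
    · have := big_block_no_zero (hst (0 : Fin 2)) hi; omega
    · exact hi
  have hB1 : B 1 = {0} := by
    obtain ⟨a, ha⟩ := Finset.card_eq_one.mp hc1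
    rw [ha] at hi1 ⊢
    rw [Finset.mem_singleton.mp hi1]
  have hsub : B 0 ⊆ ({1, 2, 3} : Finset (Fin 4)) := by
    intro v hv
    have hvne : v ≠ 0 := by
      intro hv0
      subst hv0
      exact absurd hi1 (Finset.disjoint_left.mp (hdisj (0 : Fin 2) (1 : Fin 2) (by decide)) hv)
    fin_cases v
    · exact absurd rfl hvne
    · decide
    · decide
    · decide
  have hB0 : B 0 = ({1, 2, 3} : Finset (Fin 4)) :=
    Finset.eq_of_subset_of_card_le hsub (by rw [hc0]; decide)
  funext i
  fin_cases i
  · exact hB0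
  · exact hB1

lemma a31_one : aTilde claw [3, 1] = 1 := by
  rw [aTilde, Nat.card_eq_one_iff_unique]
  constructor
  · constructor
    rintro ⟨B, hB⟩ ⟨C, hC⟩
    simp only [Subtype.mk_eq_mk]
    rw [a31_char B hB, a31_char C hC]
  · refine ⟨![({1, 2, 3} : Finset (Fin 4)), {0}], ?_, ?_, ?_, ?_⟩
    · intro i
      fin_cases i
      · intro v hv w hw hadj
        rw [claw_adj] at hadj
        fin_cases hv <;> fin_cases hw <;> simp_all
      · intro v hv w hw hadj
        fin_cases hv
        fin_cases hw
        exact claw.loopless.irrefl _ hadj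
    · intro i j hij
      fin_cases i <;> fin_cases j <;> revert hij <;> decide
    · intro v
      fin_cases v
      · exact ⟨(1 : Fin 2), by decide⟩
      · exact ⟨(0 : Fin 2), by decide⟩
      · exact ⟨(0 : Fin 2), by decide⟩
      · exact ⟨(0 : Fin 2), by decide⟩
    · intro i
      fin_cases i <;> decide

theorem claw_not_stronglyNice :
    DominatedBy [2, 2] [3, 1] ∧
    aTilde claw [2, 2] = 0 ∧
    aTilde claw [3, 1] = 1 ∧
    ¬ StronglyNice claw := by
  have hdom : DominatedBy [2, 2] [3, 1] := by
    intro k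
    match k with
    | 0 => simp
    | 1 => simp
    | (n+2) =>
      rw [List.take_of_length_le (by simp), List.take_of_length_le (by simp)]
      decide
  refine ⟨hdom, a22_zero, a31_one, fun h => ?_⟩
  have := h [3, 1] [2, 2] ⟨by decide, by decide, by simp⟩ ⟨by decide, by decide, by simp⟩ hdom
  rw [a22_zero, a31_one] at this
  omega
end

section
/- For every integer n ≥ 3, the squid graph Sq(2n−1; 1^n) is not strongly nice: the partition (n,n,n−1) is below (n+1,n−1,n−1) in dominance order, yet ã_{(n,n,n−1)}(Sq(2n−1;1^n)) < ã_{(n+1,n−1,n−1)}(Sq(2n−1;1^n)). -/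
def squid (n : ℕ) : SimpleGraph (Fin (2 * n - 1) ⊕ Fin n) :=
  SimpleGraph.fromRel (fun x y =>
    match x, y with
    | Sum.inl i, Sum.inl j => (i.val + 1) % (2 * n - 1) = j.val
    | Sum.inl i, Sum.inr _ => i.val = 0
    | _, _ => False)

namespace SquidProof

set_option linter.unusedSectionVars false

abbrev VV (n : ℕ) := Fin (2 * n - 1) ⊕ Fin n

variable {n : ℕ} [NeZero (2 * n - 1)]

lemma val_add_one (i : Fin (2 * n - 1)) :
    ((i + 1 : Fin (2 * n - 1))).val = (i.val + 1) % (2 * n - 1) := by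
  rw [Fin.val_add, Fin.val_one']
  conv_rhs => rw [Nat.add_mod, Nat.mod_eq_of_lt i.isLt]

lemma succ_val_iff (i j : Fin (2 * n - 1)) :
    (i.val + 1) % (2 * n - 1) = j.val ↔ i + 1 = j := by
  rw [Fin.ext_iff, val_add_one]

lemma adj_inl_inl (i j : Fin (2 * n - 1)) :
    (squid n).Adj (Sum.inl i) (Sum.inl j) ↔ i ≠ j ∧ (i + 1 = j ∨ j + 1 = i) := by
  rw [squid, SimpleGraph.fromRel_adj]
  constructor
  · rintro ⟨hne, h | h⟩
    · exact ⟨fun e => hne (by rw [e]), Or.inl ((succ_val_iff i j).1 h)⟩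
    · exact ⟨fun e => hne (by rw [e]), Or.inr ((succ_val_iff j i).1 h)⟩
  · rintro ⟨hne, h | h⟩
    · exact ⟨fun e => hne (Sum.inl.inj e), Or.inl ((succ_val_iff i j).2 h)⟩
    · exact ⟨fun e => hne (Sum.inl.inj e), Or.inr ((succ_val_iff j i).2 h)⟩

lemma adj_inl_inr (i : Fin (2 * n - 1)) (k : Fin n) :
    (squid n).Adj (Sum.inl i) (Sum.inr k) ↔ i.val = 0 := by
  rw [squid, SimpleGraph.fromRel_adj]
  constructor
  · rintro ⟨-, h | h⟩
    · exact h
    · exact h.elim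
  · intro h; exact ⟨by simp, Or.inl h⟩

lemma adj_inr_inl (i : Fin (2 * n - 1)) (k : Fin n) :
    (squid n).Adj (Sum.inr k) (Sum.inl i) ↔ i.val = 0 := by
  rw [(squid n).adj_comm]; exact adj_inl_inr i k

lemma not_adj_inr_inr (k l : Fin n) : ¬ (squid n).Adj (Sum.inr k) (Sum.inr l) := by
  rw [squid, SimpleGraph.fromRel_adj]
  rintro ⟨-, h | h⟩ <;> exact h

lemma self_ne_add_one (hn : 3 ≤ n) (i : Fin (2 * n - 1)) : i ≠ i + 1 := by
  intro h
  have : i.val = (i.val + 1) % (2 * n - 1) := by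
    conv_lhs => rw [h]
    exact val_add_one i
  have hlt := i.isLt
  rcases Nat.lt_or_ge (i.val + 1) (2 * n - 1) with hc | hc
  · rw [Nat.mod_eq_of_lt hc] at this; omega
  · have : (i.val + 1) % (2 * n - 1) = 0 := by
      have : i.val + 1 = 2 * n - 1 := by omega
      rw [this, Nat.mod_self]
    omega

lemma stable_cycle_card (hn : 3 ≤ n) (T : Finset (Fin (2 * n - 1)))
    (hT : ∀ i ∈ T, i + 1 ∉ T) : T.card ≤ n - 1 := by
  classical
  have hinj : Function.Injective (fun i : Fin (2 * n - 1) => i + 1) :=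
    fun a b h => by simpa using h
  have himg : (T.image (fun i => i + 1)).card = T.card :=
    Finset.card_image_of_injective _ hinj
  have hdisj : Disjoint T (T.image (fun i => i + 1)) := by
    rw [Finset.disjoint_right]
    intro x hx hxT
    obtain ⟨i, hi, rfl⟩ := Finset.mem_image.1 hx
    exact hT i hi hxT
  have hle := Finset.card_le_univ (T ∪ T.image (fun i => i + 1))
  rw [Finset.card_union_of_disjoint hdisj, himg] at hle
  simp only [Finset.card_univ, Fintype.card_fin] at hle
  omega

lemma exists_gap (hn : 3 ≤ n) (T : Finset (Fin (2 * n - 1)))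
    (hT : ∀ i ∈ T, i + 1 ∉ T) (hcard : T.card = n - 1) :
    ∃ x : Fin (2 * n - 1), x ∉ T ∧ x + 1 ∉ T ∧
      ∀ y : Fin (2 * n - 1), y ∉ T → y + 1 ∉ T → y = x := by
  classical
  set S := T ∪ T.image (fun i => i - 1) with hS
  have hmem : ∀ x : Fin (2 * n - 1), x ∈ S ↔ (x ∈ T ∨ x + 1 ∈ T) := by
    intro x
    simp only [hS, Finset.mem_union, Finset.mem_image]
    constructor
    · rintro (h | ⟨i, hi, rfl⟩)
      · exact Or.inl h
      · exact Or.inr (by simpa using hi)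
    · rintro (h | h)
      · exact Or.inl h
      · exact Or.inr ⟨x + 1, h, by simp⟩
  have hdisj : Disjoint T (T.image (fun i => i - 1)) := by
    rw [Finset.disjoint_right]
    intro x hx hxT
    obtain ⟨i, hi, rfl⟩ := Finset.mem_image.1 hx
    exact hT _ hxT (by simpa using hi)
  have hinj : Function.Injective (fun i : Fin (2 * n - 1) => i - 1) :=
    fun a b h => by simpa using h
  have hcardS : S.card = 2 * n - 2 := by
    rw [hS, Finset.card_union_of_disjoint hdisj,
      Finset.card_image_of_injective _ hinj, hcard]
    omega
  have hcompl : Sᶜ.card = 1 := by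
    rw [Finset.card_compl, hcardS]
    simp only [Fintype.card_fin]
    omega
  obtain ⟨x, hx⟩ := Finset.card_eq_one.1 hcompl
  have hxmem : ∀ y : Fin (2 * n - 1), y ∈ Sᶜ ↔ y = x := by
    intro y; rw [hx, Finset.mem_singleton]
  refine ⟨x, ?_, ?_, ?_⟩
  · have := (hxmem x).2 rfl
    rw [Finset.mem_compl, hmem] at this
    exact fun h => this (Or.inl h)
  · have := (hxmem x).2 rfl
    rw [Finset.mem_compl, hmem] at this
    exact fun h => this (Or.inr h)
  · intro y h1 h2
    apply (hxmem y).1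
    rw [Finset.mem_compl, hmem]
    rintro (h | h)
    · exact h1 h
    · exact h2 h


lemma fin3_cases : ∀ a b j : Fin 3, a ≠ b → a ≠ 2 → b ≠ 2 → j ≠ 2 → j = a ∨ j = b := by
  decide

open scoped Classical

lemma cycle_structure (hn : 3 ≤ n) (Bi : Finset (VV n))
    (hst : IsStableSet (squid n) Bi) (h0 : Sum.inl (0 : Fin (2 * n - 1)) ∈ Bi) :
    ∃ T : Finset (Fin (2 * n - 1)),
      (∀ i, i ∈ T ↔ Sum.inl i ∈ Bi) ∧ (∀ i ∈ T, i + 1 ∉ T) ∧ T.card = Bi.card := by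
  classical
  have hnoinr : ∀ k : Fin n, Sum.inr k ∉ Bi := by
    intro k hk
    exact hst _ h0 _ hk ((adj_inl_inr 0 k).2 rfl)
  refine ⟨Finset.univ.filter (fun i => Sum.inl i ∈ Bi), by simp, ?_, ?_⟩
  · intro i hi h1
    simp only [Finset.mem_filter, Finset.mem_univ, true_and] at hi h1
    exact hst _ hi _ h1 ((adj_inl_inl i (i + 1)).2 ⟨self_ne_add_one hn i, Or.inl rfl⟩)
  · have : Bi = (Finset.univ.filter (fun i => Sum.inl i ∈ Bi)).image Sum.inl := by
      ext v
      rcases v with i | k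
      · simp
      · simp [hnoinr k]
    conv_rhs => rw [this]
    rw [Finset.card_image_of_injective _ Sum.inl_injective]

lemma inl0_block_card (hn : 3 ≤ n) (Bi : Finset (VV n))
    (hst : IsStableSet (squid n) Bi) (h0 : Sum.inl (0 : Fin (2 * n - 1)) ∈ Bi) :
    Bi.card ≤ n - 1 := by
  obtain ⟨T, _, hTst, hTcard⟩ := cycle_structure hn Bi hst h0
  rw [← hTcard]
  exact stable_cycle_card hn T hTst

lemma marks_card (hn : 3 ≤ n) (B : Fin 3 → Finset (VV n))
    (hst : ∀ i, IsStableSet (squid n) (B i))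
    (hdis : ∀ i j : Fin 3, i ≠ j → Disjoint (B i) (B j))
    (hcov : ∀ v : VV n, ∃ i, v ∈ B i)
    (h0 : Sum.inl (0 : Fin (2 * n - 1)) ∈ B 2)
    (hcard2 : (B 2).card = n - 1)
    (a b : Fin 3) (hab : a ≠ b) (ha : a ≠ 2) (hb : b ≠ 2) :
    ((B a).filter (fun t => IsStableSet (squid n) (insert t (B b)))).card
      = (B a).card - 1 := by
  obtain ⟨T, hTmem, hTst, hTcard⟩ := cycle_structure hn (B 2) (hst 2) h0
  rw [hcard2] at hTcard
  obtain ⟨x, hx1, hx2, hxu⟩ := exists_gap hn T hTst hTcard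
  have hloc : ∀ i : Fin (2 * n - 1), i ∉ T →
      Sum.inl i ∈ B a ∨ Sum.inl i ∈ B b := by
    intro i hi
    obtain ⟨j, hj⟩ := hcov (Sum.inl i)
    have hj2 : j ≠ 2 := by
      rintro rfl
      exact hi ((hTmem i).2 hj)
    rcases fin3_cases a b j hab ha hb hj2 with rfl | rfl
    · exact Or.inl hj
    · exact Or.inr hj
  have hne : x ≠ x + 1 := self_ne_add_one hn x
  have hadjx : (squid n).Adj (Sum.inl x) (Sum.inl (x + 1)) :=
    (adj_inl_inl x (x + 1)).2 ⟨hne, Or.inl rfl⟩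
  obtain ⟨e, f, he, hf, hadjef, huniq⟩ :
      ∃ e f : Fin (2 * n - 1), Sum.inl e ∈ B a ∧ Sum.inl f ∈ B b ∧
        (squid n).Adj (Sum.inl e) (Sum.inl f) ∧
        ∀ i j : Fin (2 * n - 1), i ∉ T → j ∉ T → (i + 1 = j ∨ j + 1 = i) →
          (i = e ∧ j = f) ∨ (i = f ∧ j = e) := by
    have key : ∀ i j : Fin (2 * n - 1), i ∉ T → j ∉ T → (i + 1 = j ∨ j + 1 = i) →
        (i = x ∧ j = x + 1) ∨ (i = x + 1 ∧ j = x) := by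
      intro i j hi hj hij
      rcases hij with h | h
      · left; have := hxu i hi (h ▸ hj); exact ⟨this, by rw [← h, this]⟩
      · right; have := hxu j hj (h ▸ hi); exact ⟨by rw [← h, this], this⟩
    rcases hloc x hx1 with hxa | hxb
    · rcases hloc (x + 1) hx2 with hya | hyb
      · exact absurd hadjx (hst a _ hxa _ hya)
      · exact ⟨x, x + 1, hxa, hyb, hadjx, key⟩
    · rcases hloc (x + 1) hx2 with hya | hyb
      · refine ⟨x + 1, x, hya, hxb, hadjx.symm, ?_⟩
        intro i j hi hj hij
        rcases key i j hi hj hij with ⟨h1, h2⟩ | ⟨h1, h2⟩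
        · exact Or.inr ⟨h1, h2⟩
        · exact Or.inl ⟨h1, h2⟩
      · exact absurd hadjx.symm (hst b _ hyb _ hxb)
  have hnotinT : ∀ (c : Fin 3), c ≠ 2 → ∀ i : Fin (2 * n - 1), Sum.inl i ∈ B c → i ∉ T := by
    intro c hc i hic hiT
    exact (Finset.disjoint_left.1 (hdis c 2 hc)) hic ((hTmem i).1 hiT)
  have hfilter : (B a).filter (fun t => IsStableSet (squid n) (insert t (B b)))
      = (B a).erase (Sum.inl e) := by
    ext t
    simp only [Finset.mem_filter, Finset.mem_erase]
    constructor
    · rintro ⟨hta, hstab⟩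
      refine ⟨?_, hta⟩
      rintro rfl
      exact hstab _ (Finset.mem_insert_self _ _) _ (Finset.mem_insert_of_mem hf) hadjef
    · rintro ⟨htne, hta⟩
      refine ⟨hta, ?_⟩
      have claim : ∀ w ∈ B b, ¬ (squid n).Adj t w := by
        intro w hw' hadj
        rcases t with i | k
        · rcases w with j | l
          · obtain ⟨hij, hor⟩ := (adj_inl_inl i j).1 hadj
            have hiT : i ∉ T := hnotinT a ha i hta
            have hjT : j ∉ T := hnotinT b hb j hw'
            rcases huniq i j hiT hjT hor with ⟨rfl, rfl⟩ | ⟨rfl, rfl⟩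
            · exact htne rfl
            · exact (Finset.disjoint_left.1 (hdis a b hab)) hta hf
          · have hi0 : i = 0 := Fin.ext ((adj_inl_inr i l).1 hadj)
            subst hi0
            exact (Finset.disjoint_left.1 (hdis a 2 ha)) hta h0
        · rcases w with j | l
          · have hj0 : j = 0 := Fin.ext ((adj_inr_inl j k).1 hadj)
            subst hj0
            exact (Finset.disjoint_left.1 (hdis b 2 hb)) hw' h0
          · exact not_adj_inr_inr k l hadj
      intro v hv w hw hadj
      rcases Finset.mem_insert.1 hv with rfl | hv'
      · rcases Finset.mem_insert.1 hw with rfl | hw'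
        · exact (squid n).irrefl hadj
        · exact claim w hw' hadj
      · rcases Finset.mem_insert.1 hw with rfl | hw'
        · exact claim v hv' hadj.symm
        · exact hst b _ hv' _ hw' hadj
  rw [hfilter, Finset.card_erase_of_mem he]

lemma forall_fin3 {P : Fin 3 → Prop} (h0 : P 0) (h1 : P 1) (h2 : P 2) : ∀ i, P i := by
  intro i; fin_cases i <;> assumption

lemma pairwise_disjoint3 {α : Type*} {C : Fin 3 → Finset α}
    (h01 : Disjoint (C 0) (C 1)) (h02 : Disjoint (C 0) (C 2))
    (h12 : Disjoint (C 1) (C 2)) :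
    ∀ i j : Fin 3, i ≠ j → Disjoint (C i) (C j) := by
  intro i j hij
  fin_cases i <;> fin_cases j <;>
    first
      | exact absurd rfl hij
      | assumption
      | exact h01.symm
      | exact h02.symm
      | exact h12.symm

lemma stable_subset {G : SimpleGraph (VV n)} {s u : Finset (VV n)}
    (hsu : s ⊆ u) (hu : IsStableSet G u) : IsStableSet G s :=
  fun v hv w hw => hu v (hsu hv) w (hsu hw)

lemma fin3_ne0 : ∀ i : Fin 3, i ≠ 0 → i = 1 ∨ i = 2 := by decide

lemma inl0_mem_B2_lam (hn : 3 ≤ n) (B : Fin 3 → Finset (VV n))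
    (h : SemiOrderedStable (squid n) [n, n, n - 1] B) :
    Sum.inl (0 : Fin (2 * n - 1)) ∈ B 2 := by
  obtain ⟨h1, h2, h3, h4⟩ := h
  obtain ⟨i, hi⟩ := h3 (Sum.inl 0)
  have hcard := inl0_block_card hn (B i) (h1 i) hi
  have : i = (2 : Fin 3) := by
    by_contra hne
    rcases fin3_cases 0 1 i (by decide) (by decide) (by decide) hne with rfl | rfl
    · have hc : (B (0 : Fin 3)).card = n := h4 (0 : Fin 3); omega
    · have hc : (B (1 : Fin 3)).card = n := h4 (1 : Fin 3); omega
  subst this; exact hi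

lemma inl0_mem_mu (hn : 3 ≤ n) (B : Fin 3 → Finset (VV n))
    (h : SemiOrderedStable (squid n) [n + 1, n - 1, n - 1] B) :
    Sum.inl (0 : Fin (2 * n - 1)) ∈ B 1 ∨ Sum.inl (0 : Fin (2 * n - 1)) ∈ B 2 := by
  obtain ⟨h1, h2, h3, h4⟩ := h
  obtain ⟨i, hi⟩ := h3 (Sum.inl 0)
  have hcard := inl0_block_card hn (B i) (h1 i) hi
  have hne : i ≠ (0 : Fin 3) := by
    rintro rfl
    have hc : (B (0 : Fin 3)).card = n + 1 := h4 (0 : Fin 3)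
    omega
  rcases fin3_ne0 i hne with rfl | rfl
  · exact Or.inl hi
  · exact Or.inr hi

lemma fin3_all : ∀ i : Fin 3, i = 0 ∨ i = 1 ∨ i = 2 := by decide

def Atype (n : ℕ) : Type :=
  {p : (Fin 3 → Finset (VV n)) × VV n //
    SemiOrderedStable (squid n) [n, n, n - 1] p.1 ∧ p.2 ∈ p.1 1 ∧
      IsStableSet (squid n) (insert p.2 (p.1 0))}

def Ctype (n : ℕ) [NeZero (2 * n - 1)] : Type :=
  {p : (Fin 3 → Finset (VV n)) × VV n //
    (SemiOrderedStable (squid n) [n + 1, n - 1, n - 1] p.1 ∧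
      Sum.inl (0 : Fin (2 * n - 1)) ∈ p.1 2) ∧ p.2 ∈ p.1 0 ∧
      IsStableSet (squid n) (insert p.2 (p.1 1))}

lemma AtoC_aux (hn : 3 ≤ n) (B : Fin 3 → Finset (VV n)) (t : VV n)
    (hB : SemiOrderedStable (squid n) [n, n, n - 1] B) (ht : t ∈ B 1)
    (hstab : IsStableSet (squid n) (insert t (B 0))) :
    (SemiOrderedStable (squid n) [n + 1, n - 1, n - 1]
        ![insert t (B 0), (B 1).erase t, B 2] ∧
      Sum.inl (0 : Fin (2 * n - 1)) ∈ (![insert t (B 0), (B 1).erase t, B 2]) 2) ∧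
    t ∈ (![insert t (B 0), (B 1).erase t, B 2]) 0 ∧
    IsStableSet (squid n) (insert t ((![insert t (B 0), (B 1).erase t, B 2]) 1)) := by
  have h02 := inl0_mem_B2_lam hn B hB
  obtain ⟨h1, h2, h3, h4⟩ := hB
  have h1' : ∀ i : Fin 3, IsStableSet (squid n) (B i) := h1
  have h2' : ∀ i j : Fin 3, i ≠ j → Disjoint (B i) (B j) := h2
  have ht0 : t ∉ B 0 := Finset.disjoint_left.1 (h2' 1 0 (by decide)) ht
  have ht2 : t ∉ B 2 := Finset.disjoint_left.1 (h2' 1 2 (by decide)) ht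
  have hc0 : (B 0).card = n := h4 (0 : Fin 3)
  have hc1 : (B 1).card = n := h4 (1 : Fin 3)
  have hc2 : (B 2).card = n - 1 := h4 (2 : Fin 3)
  refine ⟨⟨⟨forall_fin3 ?_ ?_ ?_, pairwise_disjoint3 ?_ ?_ ?_, ?_, forall_fin3 ?_ ?_ ?_⟩, h02⟩,
    Finset.mem_insert_self t _, ?_⟩
  · exact hstab
  · exact stable_subset (Finset.erase_subset _ _) (h1' 1)
  · exact h1' 2
  · -- Disjoint (insert t (B 0)) ((B 1).erase t)
    rw [Finset.disjoint_left]
    intro v hv hv'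
    rcases Finset.mem_insert.1 hv with rfl | hv0
    · exact (Finset.notMem_erase v _) hv'
    · exact Finset.disjoint_left.1 (h2' 0 1 (by decide)) hv0
        (Finset.erase_subset _ _ hv')
  · rw [Finset.disjoint_left]
    intro v hv hv'
    rcases Finset.mem_insert.1 hv with rfl | hv0
    · exact ht2 hv'
    · exact Finset.disjoint_left.1 (h2' 0 2 (by decide)) hv0 hv'
  · exact (h2' 1 2 (by decide)).mono_left (Finset.erase_subset _ _)
  · intro v
    obtain ⟨i, hi⟩ := h3 v
    rcases fin3_all i with rfl | rfl | rfl
    · exact ⟨(0 : Fin 3), Finset.mem_insert_of_mem hi⟩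
    · by_cases hvt : v = t
      · exact ⟨(0 : Fin 3), by rw [hvt]; exact Finset.mem_insert_self t _⟩
      · exact ⟨(1 : Fin 3), Finset.mem_erase.2 ⟨hvt, hi⟩⟩
    · exact ⟨(2 : Fin 3), hi⟩
  · show (insert t (B 0)).card = n + 1
    rw [Finset.card_insert_of_notMem ht0, hc0]
  · show ((B 1).erase t).card = n - 1
    rw [Finset.card_erase_of_mem ht, hc1]
  · exact hc2
  · show IsStableSet (squid n) (insert t ((B 1).erase t))
    rw [Finset.insert_erase ht]
    exact h1' 1

lemma CtoA_aux (hn : 3 ≤ n) (C : Fin 3 → Finset (VV n)) (s : VV n)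
    (hC : SemiOrderedStable (squid n) [n + 1, n - 1, n - 1] C)
    (h02 : Sum.inl (0 : Fin (2 * n - 1)) ∈ C 2) (hs : s ∈ C 0)
    (hstab : IsStableSet (squid n) (insert s (C 1))) :
    SemiOrderedStable (squid n) [n, n, n - 1]
        ![(C 0).erase s, insert s (C 1), C 2] ∧
    s ∈ (![(C 0).erase s, insert s (C 1), C 2]) 1 ∧
    IsStableSet (squid n) (insert s ((![(C 0).erase s, insert s (C 1), C 2]) 0)) := by
  obtain ⟨h1, h2, h3, h4⟩ := hC
  have h1' : ∀ i : Fin 3, IsStableSet (squid n) (C i) := h1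
  have h2' : ∀ i j : Fin 3, i ≠ j → Disjoint (C i) (C j) := h2
  have hs1 : s ∉ C 1 := Finset.disjoint_left.1 (h2' 0 1 (by decide)) hs
  have hs2 : s ∉ C 2 := Finset.disjoint_left.1 (h2' 0 2 (by decide)) hs
  have hc0 : (C 0).card = n + 1 := h4 (0 : Fin 3)
  have hc1 : (C 1).card = n - 1 := h4 (1 : Fin 3)
  have hc2 : (C 2).card = n - 1 := h4 (2 : Fin 3)
  refine ⟨⟨forall_fin3 ?_ ?_ ?_, pairwise_disjoint3 ?_ ?_ ?_, ?_, forall_fin3 ?_ ?_ ?_⟩,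
    Finset.mem_insert_self s _, ?_⟩
  · exact stable_subset (Finset.erase_subset _ _) (h1' 0)
  · exact hstab
  · exact h1' 2
  · rw [Finset.disjoint_left]
    intro v hv hv'
    have hv0 := Finset.mem_of_mem_erase hv
    rcases Finset.mem_insert.1 hv' with rfl | hv1
    · exact (Finset.notMem_erase v _) hv
    · exact Finset.disjoint_left.1 (h2' 0 1 (by decide)) hv0 hv1
  · exact (h2' 0 2 (by decide)).mono_left (Finset.erase_subset _ _)
  · rw [Finset.disjoint_left]
    intro v hv hv'
    rcases Finset.mem_insert.1 hv with rfl | hv1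
    · exact hs2 hv'
    · exact Finset.disjoint_left.1 (h2' 1 2 (by decide)) hv1 hv'
  · intro v
    obtain ⟨i, hi⟩ := h3 v
    rcases fin3_all i with rfl | rfl | rfl
    · by_cases hvs : v = s
      · exact ⟨(1 : Fin 3), by rw [hvs]; exact Finset.mem_insert_self s _⟩
      · exact ⟨(0 : Fin 3), Finset.mem_erase.2 ⟨hvs, hi⟩⟩
    · exact ⟨(1 : Fin 3), Finset.mem_insert_of_mem hi⟩
    · exact ⟨(2 : Fin 3), hi⟩
  · show ((C 0).erase s).card = n
    rw [Finset.card_erase_of_mem hs, hc0]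
    omega
  · show (insert s (C 1)).card = n
    rw [Finset.card_insert_of_notMem hs1, hc1]
    omega
  · exact hc2
  · show IsStableSet (squid n) (insert s ((C 0).erase s))
    rw [Finset.insert_erase hs]
    exact h1' 0

def AtoC (hn : 3 ≤ n) : Atype n ≃ Ctype n where
  toFun p := ⟨(![insert p.1.2 (p.1.1 0), (p.1.1 1).erase p.1.2, p.1.1 2], p.1.2),
    AtoC_aux hn p.1.1 p.1.2 p.2.1 p.2.2.1 p.2.2.2⟩
  invFun p := ⟨(![(p.1.1 0).erase p.1.2, insert p.1.2 (p.1.1 1), p.1.1 2], p.1.2),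
    CtoA_aux hn p.1.1 p.1.2 p.2.1.1 p.2.1.2 p.2.2.1 p.2.2.2⟩
  left_inv p := by
    obtain ⟨⟨B, t⟩, hB, ht, hstab⟩ := p
    have h2' : ∀ i j : Fin 3, i ≠ j → Disjoint (B i) (B j) := hB.2.1
    have ht0 : t ∉ B 0 := Finset.disjoint_left.1 (h2' 1 0 (by decide)) ht
    apply Subtype.ext
    dsimp only
    congr 1
    funext i
    rcases fin3_all i with rfl | rfl | rfl
    · exact Finset.erase_insert ht0
    · exact Finset.insert_erase ht
    · rfl
  right_inv p := by
    obtain ⟨⟨C, s⟩, ⟨hC, h02⟩, hs, hstab⟩ := p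
    have h2' : ∀ i j : Fin 3, i ≠ j → Disjoint (C i) (C j) := hC.2.1
    have hs1 : s ∉ C 1 := Finset.disjoint_left.1 (h2' 0 1 (by decide)) hs
    apply Subtype.ext
    dsimp only
    congr 1
    funext i
    rcases fin3_all i with rfl | rfl | rfl
    · exact Finset.insert_erase hs
    · exact Finset.erase_insert hs1
    · rfl

lemma card_Atype (hn : 3 ≤ n) :
    Nat.card (Atype n) =
      Nat.card {B : Fin 3 → Finset (VV n) //
        SemiOrderedStable (squid n) [n, n, n - 1] B} * (n - 1) := by
  classical
  have e1 : Atype n ≃ Σ B : {B : Fin 3 → Finset (VV n) //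
      SemiOrderedStable (squid n) [n, n, n - 1] B},
      {t : VV n // t ∈ B.1 1 ∧ IsStableSet (squid n) (insert t (B.1 0))} :=
    { toFun := fun p => ⟨⟨p.1.1, p.2.1⟩, ⟨p.1.2, p.2.2.1, p.2.2.2⟩⟩
      invFun := fun q => ⟨(q.1.1, q.2.1), q.1.2, q.2.2.1, q.2.2.2⟩
      left_inv := fun p => rfl
      right_inv := fun q => rfl }
  rw [Nat.card_congr e1, Nat.card_eq_fintype_card, Fintype.card_sigma]
  have hfib : ∀ B : {B : Fin 3 → Finset (VV n) //
      SemiOrderedStable (squid n) [n, n, n - 1] B},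
      Fintype.card {t : VV n // t ∈ B.1 1 ∧
        IsStableSet (squid n) (insert t (B.1 0))} = n - 1 := by
    rintro ⟨B, hB⟩
    have h02 := inl0_mem_B2_lam hn B hB
    rw [Fintype.card_subtype]
    have heq : (Finset.univ.filter fun t : VV n =>
        t ∈ B 1 ∧ IsStableSet (squid n) (insert t (B 0)))
        = (B 1).filter (fun t => IsStableSet (squid n) (insert t (B 0))) := by
      ext t
      simp [Finset.mem_filter]
    rw [heq]
    obtain ⟨h1, h2, h3, h4⟩ := hB
    have hc1 : (B 1).card = n := h4 (1 : Fin 3)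
    have hc2 : (B 2).card = n - 1 := h4 (2 : Fin 3)
    rw [marks_card hn B h1 h2 h3 h02 hc2 1 0 (by decide) (by decide) (by decide), hc1]
  rw [Finset.sum_congr rfl (fun B _ => hfib B), Finset.sum_const, Finset.card_univ,
    smul_eq_mul, Nat.card_eq_fintype_card]

lemma card_Ctype (hn : 3 ≤ n) :
    Nat.card (Ctype n) =
      Nat.card {B : Fin 3 → Finset (VV n) //
        SemiOrderedStable (squid n) [n + 1, n - 1, n - 1] B ∧
          Sum.inl (0 : Fin (2 * n - 1)) ∈ B 2} * n := by
  classical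
  have e1 : Ctype n ≃ Σ B : {B : Fin 3 → Finset (VV n) //
      SemiOrderedStable (squid n) [n + 1, n - 1, n - 1] B ∧
        Sum.inl (0 : Fin (2 * n - 1)) ∈ B 2},
      {s : VV n // s ∈ B.1 0 ∧ IsStableSet (squid n) (insert s (B.1 1))} :=
    { toFun := fun p => ⟨⟨p.1.1, p.2.1⟩, ⟨p.1.2, p.2.2.1, p.2.2.2⟩⟩
      invFun := fun q => ⟨(q.1.1, q.2.1), q.1.2, q.2.2.1, q.2.2.2⟩
      left_inv := fun p => rfl
      right_inv := fun q => rfl }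
  rw [Nat.card_congr e1, Nat.card_eq_fintype_card, Fintype.card_sigma]
  have hfib : ∀ B : {B : Fin 3 → Finset (VV n) //
      SemiOrderedStable (squid n) [n + 1, n - 1, n - 1] B ∧
        Sum.inl (0 : Fin (2 * n - 1)) ∈ B 2},
      Fintype.card {s : VV n // s ∈ B.1 0 ∧
        IsStableSet (squid n) (insert s (B.1 1))} = n := by
    rintro ⟨B, hB, h02⟩
    rw [Fintype.card_subtype]
    have heq : (Finset.univ.filter fun s : VV n =>
        s ∈ B 0 ∧ IsStableSet (squid n) (insert s (B 1)))
        = (B 0).filter (fun s => IsStableSet (squid n) (insert s (B 1))) := by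
      ext s
      simp [Finset.mem_filter]
    rw [heq]
    obtain ⟨h1, h2, h3, h4⟩ := hB
    have hc0 : (B 0).card = n + 1 := h4 (0 : Fin 3)
    have hc2 : (B 2).card = n - 1 := h4 (2 : Fin 3)
    rw [marks_card hn B h1 h2 h3 h02 hc2 0 1 (by decide) (by decide) (by decide), hc0]
    omega
  rw [Finset.sum_congr rfl (fun B _ => hfib B), Finset.sum_const, Finset.card_univ,
    smul_eq_mul, Nat.card_eq_fintype_card]

lemma swap_SOS (B : Fin 3 → Finset (VV n))
    (h : SemiOrderedStable (squid n) [n + 1, n - 1, n - 1] B) :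
    SemiOrderedStable (squid n) [n + 1, n - 1, n - 1]
      (B ∘ Equiv.swap (1 : Fin 3) 2) := by
  obtain ⟨h1, h2, h3, h4⟩ := h
  have h4' : ∀ i : Fin 3, (B i).card = [n + 1, n - 1, n - 1].get (i : Fin 3) := h4
  have e0 : Equiv.swap (1 : Fin 3) 2 0 = 0 :=
    Equiv.swap_apply_of_ne_of_ne (by decide) (by decide)
  have e1 : Equiv.swap (1 : Fin 3) 2 1 = 2 := Equiv.swap_apply_left _ _
  have e2 : Equiv.swap (1 : Fin 3) 2 2 = 1 := Equiv.swap_apply_right _ _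
  refine ⟨fun i => h1 _, fun i j hij => h2 _ _
    (fun e => hij ((Equiv.swap (1 : Fin 3) 2).injective e)), ?_, ?_⟩
  · intro v
    obtain ⟨i, hi⟩ := h3 v
    exact ⟨Equiv.swap (1 : Fin 3) 2 i, by
      show v ∈ B (Equiv.swap (1 : Fin 3) 2 (Equiv.swap (1 : Fin 3) 2 i))
      rw [Equiv.swap_apply_self]; exact hi⟩
  · refine forall_fin3 ?_ ?_ ?_
    · show (B (Equiv.swap (1 : Fin 3) 2 0)).card = n + 1
      rw [e0]; exact h4' 0
    · show (B (Equiv.swap (1 : Fin 3) 2 1)).card = n - 1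
      rw [e1]; exact h4' 2
    · show (B (Equiv.swap (1 : Fin 3) 2 2)).card = n - 1
      rw [e2]; exact h4' 1

def swapMu : {B : Fin 3 → Finset (VV n) //
      SemiOrderedStable (squid n) [n + 1, n - 1, n - 1] B ∧
        Sum.inl (0 : Fin (2 * n - 1)) ∈ B 1} ≃
    {B : Fin 3 → Finset (VV n) //
      SemiOrderedStable (squid n) [n + 1, n - 1, n - 1] B ∧
        Sum.inl (0 : Fin (2 * n - 1)) ∈ B 2} where
  toFun p := ⟨p.1 ∘ Equiv.swap (1 : Fin 3) 2, swap_SOS p.1 p.2.1, by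
    show Sum.inl 0 ∈ p.1 (Equiv.swap (1 : Fin 3) 2 2)
    rw [Equiv.swap_apply_right]; exact p.2.2⟩
  invFun p := ⟨p.1 ∘ Equiv.swap (1 : Fin 3) 2, swap_SOS p.1 p.2.1, by
    show Sum.inl 0 ∈ p.1 (Equiv.swap (1 : Fin 3) 2 1)
    rw [Equiv.swap_apply_left]; exact p.2.2⟩
  left_inv p := by
    apply Subtype.ext
    funext i
    show p.1 (Equiv.swap (1 : Fin 3) 2 (Equiv.swap (1 : Fin 3) 2 i)) = p.1 i
    rw [Equiv.swap_apply_self]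
  right_inv p := by
    apply Subtype.ext
    funext i
    show p.1 (Equiv.swap (1 : Fin 3) 2 (Equiv.swap (1 : Fin 3) 2 i)) = p.1 i
    rw [Equiv.swap_apply_self]

lemma card_mu (hn : 3 ≤ n) :
    Nat.card {B : Fin 3 → Finset (VV n) //
        SemiOrderedStable (squid n) [n + 1, n - 1, n - 1] B} =
      2 * Nat.card {B : Fin 3 → Finset (VV n) //
        SemiOrderedStable (squid n) [n + 1, n - 1, n - 1] B ∧
          Sum.inl (0 : Fin (2 * n - 1)) ∈ B 2} := by
  classical
  have e1 : {B : Fin 3 → Finset (VV n) //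
      SemiOrderedStable (squid n) [n + 1, n - 1, n - 1] B} ≃
      {B : Fin 3 → Finset (VV n) //
        (SemiOrderedStable (squid n) [n + 1, n - 1, n - 1] B ∧
          Sum.inl (0 : Fin (2 * n - 1)) ∈ B 1) ∨
        (SemiOrderedStable (squid n) [n + 1, n - 1, n - 1] B ∧
          Sum.inl (0 : Fin (2 * n - 1)) ∈ B 2)} :=
    Equiv.subtypeEquivRight (fun B => by
      constructor
      · intro h
        rcases inl0_mem_mu hn B h with h1 | h2
        · exact Or.inl ⟨h, h1⟩
        · exact Or.inr ⟨h, h2⟩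
      · rintro (⟨h, -⟩ | ⟨h, -⟩) <;> exact h)
  have hdisj : Disjoint
      (fun B : Fin 3 → Finset (VV n) =>
        SemiOrderedStable (squid n) [n + 1, n - 1, n - 1] B ∧
          Sum.inl (0 : Fin (2 * n - 1)) ∈ B 1)
      (fun B : Fin 3 → Finset (VV n) =>
        SemiOrderedStable (squid n) [n + 1, n - 1, n - 1] B ∧
          Sum.inl (0 : Fin (2 * n - 1)) ∈ B 2) := by
    rw [Pi.disjoint_iff]
    intro B
    rw [Prop.disjoint_iff]
    rintro ⟨⟨hB, h1⟩, ⟨-, h2⟩⟩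
    have h2' : ∀ i j : Fin 3, i ≠ j → Disjoint (B i) (B j) := hB.2.1
    exact Finset.disjoint_left.1 (h2' 1 2 (by decide)) h1 h2
  have e2 := subtypeOrEquiv _ _ hdisj
  have h5 := Nat.card_congr (e1.trans e2)
  have h6 := Nat.card_congr (swapMu (n := n))
  rw [h5]
  rw [Nat.card_sum]
  rw [h6]
  exact (two_mul _).symm

lemma adj_inl_inl_val {i j : Fin (2 * n - 1)}
    (h : (squid n).Adj (Sum.inl i) (Sum.inl j)) :
    (i.val + 1) % (2 * n - 1) = j.val ∨ (j.val + 1) % (2 * n - 1) = i.val := by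
  rw [squid, SimpleGraph.fromRel_adj] at h
  exact h.2

lemma no_adj_aux (hn : 3 ≤ n) {a b : ℕ} (ha : a < 2 * n - 1) (hb : b < 2 * n - 1)
    (h1 : ¬ ((a + 1) % (2 * n - 1) = b)) (h2 : ¬ ((b + 1) % (2 * n - 1) = a)) :
    ¬ (squid n).Adj (Sum.inl (⟨a, ha⟩ : Fin (2 * n - 1))) (Sum.inl ⟨b, hb⟩) := by
  intro h
  rcases adj_inl_inl_val h with h' | h'
  · exact h1 h'
  · exact h2 h'

lemma exists_lam (hn : 3 ≤ n) :
    Nonempty {B : Fin 3 → Finset (VV n) //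
      SemiOrderedStable (squid n) [n, n, n - 1] B} := by
  classical
  set f0 : Fin (n - 1) → VV n :=
    fun k => Sum.inl ⟨2 * k.val + 1, by have := k.isLt; omega⟩ with hf0
  set fP : Fin (n - 1) → VV n :=
    fun k => Sum.inr ⟨k.val + 1, by have := k.isLt; omega⟩ with hfP
  set f2 : Fin (n - 1) → VV n :=
    fun k => Sum.inl ⟨2 * k.val, by have := k.isLt; omega⟩ with hf2
  set p0 : VV n := Sum.inr ⟨0, by omega⟩ with hp0
  set u : VV n := Sum.inl ⟨2 * n - 2, by omega⟩ with hu
  set B0 : Finset (VV n) := insert p0 (Finset.univ.image f0) with hB0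
  set B1 : Finset (VV n) := insert u (Finset.univ.image fP) with hB1
  set E2 : Finset (VV n) := Finset.univ.image f2 with hE2
  have hmem0 : ∀ v, v ∈ B0 ↔ v = p0 ∨ ∃ k : Fin (n - 1), f0 k = v := by
    intro v; simp [hB0]
  have hmem1 : ∀ v, v ∈ B1 ↔ v = u ∨ ∃ k : Fin (n - 1), fP k = v := by
    intro v; simp [hB1]
  have hmem2 : ∀ v, v ∈ E2 ↔ ∃ k : Fin (n - 1), f2 k = v := by
    intro v; simp [hE2]
  refine ⟨⟨![B0, B1, E2], forall_fin3 ?_ ?_ ?_, pairwise_disjoint3 ?_ ?_ ?_, ?_,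
    forall_fin3 ?_ ?_ ?_⟩⟩
  · -- B0 stable
    intro v hv w hw hadj
    rcases (hmem0 v).1 hv with rfl | ⟨k, rfl⟩
    · rcases (hmem0 w).1 hw with rfl | ⟨j, rfl⟩
      · exact not_adj_inr_inr _ _ hadj
      · have := (adj_inr_inl _ _).1 hadj
        simp only [hf0] at this
        omega
    · rcases (hmem0 w).1 hw with rfl | ⟨j, rfl⟩
      · have := (adj_inl_inr _ _).1 hadj
        simp only [hf0] at this
        omega
      · have hk := k.isLt; have hj := j.isLt
        revert hadj
        simp only [hf0]
        apply no_adj_aux hn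
        · rw [Nat.mod_eq_of_lt (by omega)]; omega
        · rw [Nat.mod_eq_of_lt (by omega)]; omega
  · -- B1 stable
    intro v hv w hw hadj
    rcases (hmem1 v).1 hv with rfl | ⟨k, rfl⟩
    · rcases (hmem1 w).1 hw with rfl | ⟨j, rfl⟩
      · revert hadj
        simp only [hu]
        apply no_adj_aux hn
        · rw [show 2 * n - 2 + 1 = 2 * n - 1 by omega, Nat.mod_self]; omega
        · rw [show 2 * n - 2 + 1 = 2 * n - 1 by omega, Nat.mod_self]; omega
      · have := (adj_inl_inr _ _).1 hadj
        simp only [hu] at this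
        omega
    · rcases (hmem1 w).1 hw with rfl | ⟨j, rfl⟩
      · have := (adj_inr_inl _ _).1 hadj
        simp only [hu] at this
        omega
      · exact not_adj_inr_inr _ _ hadj
  · -- E2 stable
    intro v hv w hw hadj
    rcases (hmem2 v).1 hv with ⟨k, rfl⟩
    rcases (hmem2 w).1 hw with ⟨j, rfl⟩
    have hk := k.isLt; have hj := j.isLt
    revert hadj
    simp only [hf2]
    apply no_adj_aux hn
    · rw [Nat.mod_eq_of_lt (by omega)]; omega
    · rw [Nat.mod_eq_of_lt (by omega)]; omega
  · -- Disjoint B0 B1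
    rw [Finset.disjoint_left]
    intro v hv hv'
    rcases (hmem0 v).1 hv with rfl | ⟨k, rfl⟩
    · rcases (hmem1 p0).1 hv' with he | ⟨j, he⟩
      · simp [hp0, hu] at he
      · have hj := j.isLt
        simp only [hfP, hp0, Sum.inr.injEq, Fin.mk.injEq] at he
        omega
    · rcases (hmem1 (f0 k)).1 hv' with he | ⟨j, he⟩
      · have hk := k.isLt
        simp only [hf0, hu, Sum.inl.injEq, Fin.mk.injEq] at he
        omega
      · simp [hfP, hf0] at he
  · -- Disjoint B0 E2
    rw [Finset.disjoint_left]
    intro v hv hv'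
    rcases (hmem0 v).1 hv with rfl | ⟨k, rfl⟩
    · rcases (hmem2 p0).1 hv' with ⟨j, he⟩
      simp [hf2, hp0] at he
    · rcases (hmem2 (f0 k)).1 hv' with ⟨j, he⟩
      simp only [hf2, hf0, Sum.inl.injEq, Fin.mk.injEq] at he
      omega
  · -- Disjoint B1 E2
    rw [Finset.disjoint_left]
    intro v hv hv'
    rcases (hmem1 v).1 hv with rfl | ⟨k, rfl⟩
    · rcases (hmem2 u).1 hv' with ⟨j, he⟩
      have hj := j.isLt
      simp only [hf2, hu, Sum.inl.injEq, Fin.mk.injEq] at he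
      omega
    · rcases (hmem2 (fP k)).1 hv' with ⟨j, he⟩
      simp [hf2, hfP] at he
  · -- cover
    intro v
    rcases v with i | k
    · by_cases hpar : i.val % 2 = 0
      · by_cases hlast : i.val = 2 * n - 2
        · refine ⟨(1 : Fin 3), ?_⟩
          show Sum.inl i ∈ B1
          apply (hmem1 _).2
          left
          simp only [hu]
          congr 1
          exact Fin.ext hlast.symm |>.symm
        · refine ⟨(2 : Fin 3), ?_⟩
          show Sum.inl i ∈ E2
          apply (hmem2 _).2
          have hi := i.isLt
          refine ⟨⟨i.val / 2, by omega⟩, ?_⟩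
          simp only [hf2]
          congr 1
          exact Fin.ext (by simp; omega)
      · refine ⟨(0 : Fin 3), ?_⟩
        show Sum.inl i ∈ B0
        apply (hmem0 _).2
        right
        have hi := i.isLt
        refine ⟨⟨(i.val - 1) / 2, by omega⟩, ?_⟩
        simp only [hf0]
        congr 1
        exact Fin.ext (by simp; omega)
    · by_cases h0 : k.val = 0
      · refine ⟨(0 : Fin 3), ?_⟩
        show Sum.inr k ∈ B0
        apply (hmem0 _).2
        left
        simp only [hp0]
        congr 1
        exact Fin.ext h0
      · refine ⟨(1 : Fin 3), ?_⟩
        show Sum.inr k ∈ B1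
        apply (hmem1 _).2
        right
        have hk := k.isLt
        refine ⟨⟨k.val - 1, by omega⟩, ?_⟩
        simp only [hfP]
        congr 1
        exact Fin.ext (by simp; omega)
  · -- card B0 = n
    show B0.card = n
    rw [hB0, Finset.card_insert_of_notMem, Finset.card_image_of_injective _ ?_,
      Finset.card_univ, Fintype.card_fin]
    · omega
    · intro a b hab
      simp only [hf0, Sum.inl.injEq, Fin.mk.injEq] at hab
      exact Fin.ext (by omega)
    · intro hmem
      rcases Finset.mem_image.1 hmem with ⟨j, -, he⟩
      simp [hf0, hp0] at he
  · -- card B1 = n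
    show B1.card = n
    rw [hB1, Finset.card_insert_of_notMem, Finset.card_image_of_injective _ ?_,
      Finset.card_univ, Fintype.card_fin]
    · omega
    · intro a b hab
      simp only [hfP, Sum.inr.injEq, Fin.mk.injEq] at hab
      exact Fin.ext (by omega)
    · intro hmem
      rcases Finset.mem_image.1 hmem with ⟨j, -, he⟩
      simp [hfP, hu] at he
  · -- card E2 = n - 1
    show E2.card = n - 1
    rw [hE2, Finset.card_image_of_injective _ ?_, Finset.card_univ, Fintype.card_fin]
    intro a b hab
    simp only [hf2, Sum.inl.injEq, Fin.mk.injEq] at hab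
    exact Fin.ext (by omega)
end SquidProof

lemma squid_arith_aux (n X Y Y2 : ℕ) (hn : 3 ≤ n) (hX : 0 < X)
    (hXY : X * (n - 1) = Y2 * n) (hY : Y = 2 * Y2) : X < Y := by
  have hY2pos : 0 < Y2 := by
    rcases Nat.eq_zero_or_pos Y2 with h0 | h
    · subst h0
      simp only [Nat.zero_mul, Nat.mul_eq_zero] at hXY
      rcases hXY with h' | h' <;> omega
    · exact h
  by_contra hcon
  push_neg at hcon
  subst hY
  have hstep : Y2 * (2 * (n - 1)) ≤ Y2 * n := by
    calc Y2 * (2 * (n - 1)) = 2 * Y2 * (n - 1) := by ring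
      _ ≤ X * (n - 1) := Nat.mul_le_mul_right _ hcon
      _ = Y2 * n := hXY
  have := Nat.le_of_mul_le_mul_left hstep hY2pos
  omega

theorem squid_not_stronglyNice (n : ℕ) (hn : 3 ≤ n) :
    DominatedBy [n, n, n - 1] [n + 1, n - 1, n - 1] ∧
    aTilde (squid n) [n, n, n - 1] < aTilde (squid n) [n + 1, n - 1, n - 1] ∧
    ¬ StronglyNice (squid n) := by
  haveI : NeZero (2 * n - 1) := ⟨by omega⟩
  have hdom : DominatedBy [n, n, n - 1] [n + 1, n - 1, n - 1] := by
    intro k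
    match k with
    | 0 => simp
    | 1 => simp
    | 2 => simp [List.take]; omega
    | (k + 3) => simp [List.take]; omega
  have hkey : aTilde (squid n) [n, n, n - 1] < aTilde (squid n) [n + 1, n - 1, n - 1] := by
    have hX : aTilde (squid n) [n, n, n - 1] =
        Nat.card {B : Fin 3 → Finset (SquidProof.VV n) //
          SemiOrderedStable (squid n) [n, n, n - 1] B} := rfl
    have hY : aTilde (squid n) [n + 1, n - 1, n - 1] =
        Nat.card {B : Fin 3 → Finset (SquidProof.VV n) //
          SemiOrderedStable (squid n) [n + 1, n - 1, n - 1] B} := rfl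
    rw [hX, hY]
    have h1 := SquidProof.card_Atype (n := n) hn
    have h2 : Nat.card (SquidProof.Atype n) = Nat.card (SquidProof.Ctype n) :=
      Nat.card_congr (SquidProof.AtoC hn)
    have h3 := SquidProof.card_Ctype (n := n) hn
    have h4 := SquidProof.card_mu (n := n) hn
    have h5 : 0 < Nat.card {B : Fin 3 → Finset (SquidProof.VV n) //
        SemiOrderedStable (squid n) [n, n, n - 1] B} := by
      haveI := SquidProof.exists_lam (n := n) hn
      exact Nat.card_pos
    exact squid_arith_aux n _ _ _ hn h5 (by rw [← h1, h2, h3]) h4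
  refine ⟨hdom, hkey, ?_⟩
  intro hSN
  have hcard : Fintype.card (Fin (2 * n - 1) ⊕ Fin n) = 3 * n - 1 := by
    rw [Fintype.card_sum, Fintype.card_fin, Fintype.card_fin]
    omega
  have hP1 : IsPartitionOf (Fintype.card (Fin (2 * n - 1) ⊕ Fin n))
      [n + 1, n - 1, n - 1] := by
    refine ⟨?_, ?_, ?_⟩
    · constructor
      · intro b hb
        simp only [List.mem_cons, List.not_mem_nil, or_false] at hb
        rcases hb with rfl | rfl <;> omega
      constructor
      · intro b hb
        simp only [List.mem_cons, List.not_mem_nil, or_false] at hb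
        subst hb
        omega
      constructor
      · intro b hb
        simp only [List.not_mem_nil] at hb
      · exact List.Pairwise.nil
    · intro x hx
      simp only [List.mem_cons, List.not_mem_nil, or_false] at hx
      rcases hx with rfl | rfl | rfl <;> omega
    · rw [hcard]
      simp only [List.sum_cons, List.sum_nil]
      omega
  have hP2 : IsPartitionOf (Fintype.card (Fin (2 * n - 1) ⊕ Fin n))
      [n, n, n - 1] := by
    refine ⟨?_, ?_, ?_⟩
    · constructor
      · intro b hb
        simp only [List.mem_cons, List.not_mem_nil, or_false] at hb
        rcases hb with rfl | rfl <;> omega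
      constructor
      · intro b hb
        simp only [List.mem_cons, List.not_mem_nil, or_false] at hb
        subst hb
        omega
      constructor
      · intro b hb
        simp only [List.not_mem_nil] at hb
      · exact List.Pairwise.nil
    · intro x hx
      simp only [List.mem_cons, List.not_mem_nil, or_false] at hx
      rcases hx with rfl | rfl | rfl <;> omega
    · rw [hcard]
      simp only [List.sum_cons, List.sum_nil]
      omega
  have hle := hSN [n + 1, n - 1, n - 1] [n, n, n - 1] hP1 hP2 hdom
  exact absurd hle (not_le.2 hkey)
end

section
/- For every integer n ≥ 3, the number of semi-ordered stable partitions of the squid graph Sq(2n−1;1^n) of type (n,n,n−1) equals 2(n−1)·binomial(2n−2, n−1). -/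
open Sum Finset

set_option linter.unusedVariables false


namespace SquidAux

/-- membership of `i` in the canonical maximum stable set `S_t` of the odd cycle -/
def inS3N (n t i : ℕ) : Prop :=
  (i % 2 = 0 ∧ i ≤ 2*t) ∨ (i % 2 = 1 ∧ 2*t+3 ≤ i ∧ i ≤ 2*n-3)

/-- the j-th isolated vertex of the complement of `S_t` -/
def isoN (t j : ℕ) : ℕ := if j < t then 2*j+1 else 2*j+4

/-- property of cycle values allowed in blocks B0/B1 -/
def goodN (n t i : ℕ) : Prop :=
  (i % 2 = 1 ∧ i + 1 ≤ 2*t) ∨ (i % 2 = 0 ∧ 2*t+4 ≤ i ∧ i ≤ 2*n-2) ∨ i = 2*t+1 ∨ i = 2*t+2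

lemma inS3N_not_adj {n t a b : ℕ} (hn : 3 ≤ n) (ht : t ≤ n-2)
    (ha : inS3N n t a) (hb : inS3N n t b) :
    ¬(a+1 = b ∨ b+1 = a ∨ (a = 2*n-2 ∧ b = 0) ∨ (b = 2*n-2 ∧ a = 0)) := by
  unfold inS3N at ha hb; omega

lemma goodN_not_adj {n t a b : ℕ} (hn : 3 ≤ n) (ht : t ≤ n-2)
    (ha : goodN n t a) (hb : goodN n t b)
    (hab : ¬(a = 2*t+1 ∧ b = 2*t+2)) (hba : ¬(b = 2*t+1 ∧ a = 2*t+2)) :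
    ¬(a+1 = b ∨ b+1 = a ∨ (a = 2*n-2 ∧ b = 0) ∨ (b = 2*n-2 ∧ a = 0)) := by
  unfold goodN at ha hb; omega

lemma goodN_ne_zero {n t a : ℕ} (ha : goodN n t a) : a ≠ 0 := by
  unfold goodN at ha; omega

lemma good_not_inS3 {n t a : ℕ} (hn : 3 ≤ n) (ht : t ≤ n-2) (ha : goodN n t a) :
    ¬ inS3N n t a := by
  unfold goodN at ha; unfold inS3N; omega

lemma isoN_good {n t j : ℕ} (hn : 3 ≤ n) (ht : t ≤ n-2) (hj : j < n-2) :
    goodN n t (isoN t j) := by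
  unfold goodN isoN; split <;> omega

lemma isoN_ne_edge {t j : ℕ} : isoN t j ≠ 2*t+1 ∧ isoN t j ≠ 2*t+2 := by
  unfold isoN; split <;> omega

lemma isoN_lt {n t j : ℕ} (hn : 3 ≤ n) (ht : t ≤ n-2) (hj : j < n-2) :
    isoN t j < 2*n-1 := by
  unfold isoN; split <;> omega

lemma isoN_inj {t j1 j2 : ℕ} (h : isoN t j1 = isoN t j2) : j1 = j2 := by
  unfold isoN at h; split at h <;> split at h <;> omega

lemma coverN {n t i : ℕ} (hn : 3 ≤ n) (ht : t ≤ n-2) (hi : i < 2*n-1) :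
    inS3N n t i ∨ i = 2*t+1 ∨ i = 2*t+2 ∨ ∃ j, j < n - 2 ∧ isoN t j = i := by
  by_cases hpar : i % 2 = 0
  · by_cases h1 : i ≤ 2*t
    · exact Or.inl (Or.inl ⟨hpar, h1⟩)
    · by_cases h2 : i = 2*t+2
      · exact Or.inr (Or.inr (Or.inl h2))
      · refine Or.inr (Or.inr (Or.inr ⟨i/2 - 2, by omega, ?_⟩))
        unfold isoN; split <;> omega
  · by_cases h1 : i ≤ 2*t - 1
    · refine Or.inr (Or.inr (Or.inr ⟨i/2, by omega, ?_⟩))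
      unfold isoN; split <;> omega
    · by_cases h2 : i = 2*t+1
      · exact Or.inr (Or.inl h2)
      · exact Or.inl (Or.inr ⟨by omega, by omega, by omega⟩)




lemma stable_card_le (n : ℕ) (hn : 3 ≤ n) (s : Finset ℕ)
    (hsub : ∀ i ∈ s, i < 2*n-1)
    (hstab : ∀ i ∈ s, ∀ j ∈ s, ¬(i + 1 = j) ∧ ¬(i = 2*n-2 ∧ j = 0))
    (h0 : 0 ∈ s) : s.card ≤ n - 1 := by
  have h2n2 : 2*n-2 ∉ s := fun h => (hstab _ h _ h0).2 ⟨rfl, rfl⟩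
  have hinj : Set.InjOn (·/2) s := by
    intro i hi j hj hij
    have hij2 : i/2 = j/2 := hij
    rcases Nat.lt_trichotomy i j with h | h | h
    · exact absurd ((by omega : i + 1 = j)) (hstab i hi j hj).1
    · exact h
    · exact absurd ((by omega : j + 1 = i)) (hstab j hj i hi).1
  have hsubi : s.image (·/2) ⊆ range (n-1) := by
    intro a ha
    simp only [mem_image] at ha
    obtain ⟨i, hi, hia⟩ := ha
    have hia2 : i/2 = a := hia
    have h1 := hsub i hi
    have h2 : i ≠ 2*n-2 := fun h => h2n2 (h ▸ hi)
    simp only [mem_range]; omega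
  calc s.card = (s.image (·/2)).card := (card_image_of_injOn hinj).symm
    _ ≤ (range (n-1)).card := card_le_card hsubi
    _ = n - 1 := card_range _

lemma stable_char (n : ℕ) (hn : 3 ≤ n) (s : Finset ℕ)
    (hsub : ∀ i ∈ s, i < 2*n-1)
    (hstab : ∀ i ∈ s, ∀ j ∈ s, ¬(i + 1 = j) ∧ ¬(i = 2*n-2 ∧ j = 0))
    (h0 : 0 ∈ s) (hcard : s.card = n - 1) :
    ∃ t ≤ n - 2, ∀ i, i ∈ s ↔ inS3N n t i := by
  classical
  have h2n2 : 2*n-2 ∉ s := fun h => (hstab _ h _ h0).2 ⟨rfl, rfl⟩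
  have hlt : ∀ i ∈ s, i ≤ 2*n-3 := by
    intro i hi
    have := hsub i hi
    have : i ≠ 2*n-2 := fun h => h2n2 (h ▸ hi)
    omega
  have hinj : Set.InjOn (·/2) s := by
    intro i hi j hj hij
    have hij2 : i/2 = j/2 := hij
    rcases Nat.lt_trichotomy i j with h | h | h
    · exact absurd ((by omega : i + 1 = j)) (hstab i hi j hj).1
    · exact h
    · exact absurd ((by omega : j + 1 = i)) (hstab j hj i hi).1
  have himg : s.image (·/2) = range (n-1) := by
    apply eq_of_subset_of_card_le
    · intro a ha
      simp only [mem_image] at ha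
      obtain ⟨i, hi, hia⟩ := ha
      have hia2 : i/2 = a := hia
      have := hlt i hi
      simp only [mem_range]; omega
    · rw [card_range, card_image_of_injOn hinj, hcard]
  have class_ex : ∀ a, a ≤ n-2 → 2*a ∈ s ∨ 2*a+1 ∈ s := by
    intro a ha
    have : a ∈ s.image (·/2) := by rw [himg]; simp only [mem_range]; omega
    simp only [mem_image] at this
    obtain ⟨i, hi, h⟩ := this
    have h' : i/2 = a := h
    rcases (by omega : i = 2*a ∨ i = 2*a+1) with rfl | rfl
    · exact Or.inl hi
    · exact Or.inr hi
  have class_nb : ∀ a, ¬(2*a ∈ s ∧ 2*a+1 ∈ s) := by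
    rintro a ⟨h1, h2⟩
    exact (hstab _ h1 _ h2).1 rfl
  have h1s : 1 ∉ s := fun h => (hstab 0 h0 1 h).1 rfl
  have mono : ∀ a b, a ≤ b → b ≤ n-2 → 2*a+1 ∈ s → 2*b+1 ∈ s := by
    intro a b hab hb h
    induction b, hab using Nat.le_induction with
    | base => exact h
    | succ b hab ih =>
      have hb' : b ≤ n - 2 := by omega
      have h1 : 2*b+1 ∈ s := ih hb'
      have h2 : 2*b+2 ∉ s := fun h2 => (hstab _ h1 _ h2).1 rfl
      rcases class_ex (b+1) hb with h3 | h3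
      · exfalso
        apply h2
        have he : 2*(b+1) = 2*b+2 := by ring
        rwa [he] at h3
      · exact h3
  by_cases hex : ∃ a, a < n-1 ∧ 2*a+1 ∈ s
  · set M := Nat.find hex with hMdef
    obtain ⟨hMlt, hMs⟩ := Nat.find_spec hex
    rw [← hMdef] at hMlt hMs
    have hMmin : ∀ a, a < M → ¬(a < n-1 ∧ 2*a+1 ∈ s) := fun a ha => Nat.find_min hex ha
    have hM0 : M ≠ 0 := by
      intro h
      rw [h] at hMs
      exact h1s (by simpa using hMs)
    set t := M - 1 with htdef
    have hodd_hi : ∀ a, t+1 ≤ a → a ≤ n-2 → 2*a+1 ∈ s := by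
      intro a h1 h2
      exact mono M a (by omega) h2 hMs
    have heven_lo : ∀ a, a ≤ t → 2*a ∈ s := by
      intro a ha
      rcases class_ex a (by omega) with h | h
      · exact h
      · exact absurd ⟨by omega, h⟩ (hMmin a (by omega))
    refine ⟨t, by omega, fun i => ⟨fun hi => ?_, fun hi => ?_⟩⟩
    · have hib := hlt i hi
      by_cases hpar : i % 2 = 0
      · have ha : i = 2*(i/2) := by omega
        left
        refine ⟨hpar, ?_⟩
        by_contra hgt
        have : 2*(i/2)+1 ∈ s := hodd_hi (i/2) (by omega) (by omega)
        exact class_nb (i/2) ⟨ha ▸ hi, this⟩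
      · have ha : i = 2*(i/2)+1 := by omega
        right
        refine ⟨by omega, ?_, by omega⟩
        by_contra hlt'
        have h2 : 2*(i/2) ∈ s := heven_lo (i/2) (by omega)
        exact class_nb (i/2) ⟨h2, ha ▸ hi⟩
    · unfold inS3N at hi
      rcases hi with ⟨hpar, hle⟩ | ⟨hpar, hge, hle⟩
      · have : 2*(i/2) ∈ s := heven_lo (i/2) (by omega)
        have hi2 : i = 2*(i/2) := by omega
        exact hi2 ▸ this
      · have : 2*(i/2)+1 ∈ s := hodd_hi (i/2) (by omega) (by omega)
        have hi2 : i = 2*(i/2)+1 := by omega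
        exact hi2 ▸ this
  · push_neg at hex
    have heven : ∀ a, a ≤ n-2 → 2*a ∈ s := by
      intro a ha
      rcases class_ex a ha with h | h
      · exact h
      · exact absurd h (hex a (by omega))
    refine ⟨n-2, le_refl _, fun i => ⟨fun hi => ?_, fun hi => ?_⟩⟩
    · have hib := hlt i hi
      by_cases hpar : i % 2 = 0
      · exact Or.inl ⟨hpar, by omega⟩
      · exfalso
        have ha : i = 2*(i/2)+1 := by omega
        exact hex (i/2) (by omega) (ha ▸ hi)
    · unfold inS3N at hi
      rcases hi with ⟨hpar, hle⟩ | ⟨hpar, hge, hle⟩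
      · have : 2*(i/2) ∈ s := heven (i/2) (by omega)
        have hi2 : i = 2*(i/2) := by omega
        exact hi2 ▸ this
      · omega


-- ===== graph side =====

abbrev V (n : ℕ) := Fin (2*n-1) ⊕ Fin n

def vval (n : ℕ) : V n → ℕ := Sum.elim Fin.val (fun p => 2*n-1+p.val)

lemma vval_inj {n : ℕ} : Function.Injective (vval n) := by
  rintro (a|a) (b|b) h <;>
    simp only [vval, Sum.elim_inl, Sum.elim_inr] at h
  · exact congrArg inl (Fin.ext h)
  · exact absurd h (by have := a.isLt; omega)
  · exact absurd h (by have := b.isLt; omega)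
  · exact congrArg inr (Fin.ext (by omega))

lemma squid_adj_inl_inl {n : ℕ} (i j : Fin (2*n-1)) :
    (squid n).Adj (inl i) (inl j) ↔ (inl i : V n) ≠ inl j ∧
      ((i.val+1) % (2*n-1) = j.val ∨ (j.val+1) % (2*n-1) = i.val) :=
  SimpleGraph.fromRel_adj _ _ _

lemma squid_adj_inl_inr {n : ℕ} (i : Fin (2*n-1)) (p : Fin n) :
    (squid n).Adj (inl i) (inr p) ↔ (inl i : V n) ≠ inr p ∧ (i.val = 0 ∨ False) :=
  SimpleGraph.fromRel_adj _ _ _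

lemma squid_adj_inr_inr {n : ℕ} (p q : Fin n) :
    ¬ (squid n).Adj (inr p) (inr q) := by
  rw [show ((squid n).Adj (inr p) (inr q) ↔ (inr p : V n) ≠ inr q ∧ (False ∨ False)) from
    SimpleGraph.fromRel_adj _ _ _]
  tauto

lemma mod_succ_iff {n a b : ℕ} (ha : a < 2*n-1) (hb : b < 2*n-1) :
    (a+1) % (2*n-1) = b ↔ (a + 1 = b ∨ (a = 2*n-2 ∧ b = 0)) := by
  rcases Nat.lt_or_ge (a+1) (2*n-1) with h1 | h1
  · rw [Nat.mod_eq_of_lt h1]; omega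
  · have h2 : a + 1 = 2*n-1 := by omega
    rw [h2, Nat.mod_self]; omega

lemma adj_inl_iff {n : ℕ} (hn : 3 ≤ n) {i j : Fin (2*n-1)} :
    (squid n).Adj (inl i) (inl j) ↔
      (i.val + 1 = j.val ∨ j.val + 1 = i.val ∨
        (i.val = 2*n-2 ∧ j.val = 0) ∨ (j.val = 2*n-2 ∧ i.val = 0)) := by
  rw [squid_adj_inl_inl]
  constructor
  · rintro ⟨hne, h | h⟩
    · rcases (mod_succ_iff i.isLt j.isLt).mp h with h' | h'
      · exact Or.inl h'
      · exact Or.inr (Or.inr (Or.inl h'))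
    · rcases (mod_succ_iff j.isLt i.isLt).mp h with h' | h'
      · exact Or.inr (Or.inl h')
      · exact Or.inr (Or.inr (Or.inr h'))
  · intro h
    have hij : i ≠ j := by
      intro he
      subst he
      have := i.isLt
      omega
    refine ⟨fun hc => hij (by injection hc), ?_⟩
    rcases h with h | h | h | h
    · exact Or.inl ((mod_succ_iff i.isLt j.isLt).mpr (Or.inl h))
    · exact Or.inr ((mod_succ_iff j.isLt i.isLt).mpr (Or.inl h))
    · exact Or.inl ((mod_succ_iff i.isLt j.isLt).mpr (Or.inr h))
    · exact Or.inr ((mod_succ_iff j.isLt i.isLt).mpr (Or.inr h))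

lemma adj_pend_iff {n : ℕ} {i : Fin (2*n-1)} {p : Fin n} :
    (squid n).Adj (inl i) (inr p) ↔ i.val = 0 := by
  rw [squid_adj_inl_inr]
  constructor
  · rintro ⟨-, h | h⟩
    · exact h
    · exact absurd h not_false
  · intro h
    exact ⟨by simp, Or.inl h⟩

-- ===== block definitions =====

def s3map (n : ℕ) (t : Fin (n-1)) (a : Fin (n-1)) : V n :=
  inl ⟨if a.val ≤ t.val then 2*a.val else 2*a.val+1, by have := a.isLt; split <;> omega⟩

def blk2 (n : ℕ) (t : Fin (n-1)) : Finset (V n) := image (s3map n t) univ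

def edgeN (t : ℕ) (ε : Bool) : ℕ := if ε then 2*t+1 else 2*t+2

lemma edgeN_cases (t : ℕ) (ε : Bool) : edgeN t ε = 2*t+1 ∨ edgeN t ε = 2*t+2 := by
  unfold edgeN; cases ε <;> simp

def edgeV (n : ℕ) (t : Fin (n-1)) (ε : Bool) : V n :=
  inl ⟨edgeN t.val ε, by have := t.isLt; unfold edgeN; split <;> omega⟩

def decV (n : ℕ) (t : Fin (n-1)) : Fin (n-2) ⊕ Fin n → V n
  | inl j => inl ⟨isoN t.val j.val, by
      have := t.isLt; have := j.isLt; unfold isoN; split <;> omega⟩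
  | inr p => inr p

def blk0 (n : ℕ) (t : Fin (n-1)) (ε : Bool) (T : Finset (Fin (n-2) ⊕ Fin n)) : Finset (V n) :=
  insert (edgeV n t ε) (T.image (decV n t))

def blk1 (n : ℕ) (t : Fin (n-1)) (ε : Bool) (T : Finset (Fin (n-2) ⊕ Fin n)) : Finset (V n) :=
  univ \ (blk0 n t ε T ∪ blk2 n t)

-- ===== membership lemmas =====

lemma mem_blk2 {n : ℕ} (hn : 3 ≤ n) (t : Fin (n-1)) {v : V n} :
    v ∈ blk2 n t ↔ inS3N n t.val (vval n v) := by
  have htl := t.isLt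
  constructor
  · intro hv
    simp only [blk2, mem_image, mem_univ, true_and] at hv
    obtain ⟨a, rfl⟩ := hv
    have hat := a.isLt
    show inS3N n t.val (if a.val ≤ t.val then 2*a.val else 2*a.val+1)
    unfold inS3N; split <;> omega
  · intro hv
    cases v with
    | inr p =>
      exfalso
      have := p.isLt
      simp only [vval, Sum.elim_inr] at hv
      unfold inS3N at hv
      omega
    | inl i =>
      simp only [vval, Sum.elim_inl] at hv
      have hi := i.isLt
      unfold inS3N at hv
      simp only [blk2, mem_image, mem_univ, true_and]
      refine ⟨⟨i.val/2, by omega⟩, ?_⟩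
      unfold s3map
      apply congrArg inl
      apply Fin.ext
      show (if i.val/2 ≤ t.val then 2*(i.val/2) else 2*(i.val/2)+1) = i.val
      split <;> omega

lemma vval_decV {n : ℕ} (t : Fin (n-1)) (x : Fin (n-2) ⊕ Fin n) :
    vval n (decV n t x) = Sum.elim (fun j : Fin (n-2) => isoN t.val j.val)
      (fun p : Fin n => 2*n-1+p.val) x := by
  cases x <;> rfl

lemma blk0_inl_facts {n : ℕ} (hn : 3 ≤ n) {t : Fin (n-1)} {ε : Bool}
    {T : Finset (Fin (n-2) ⊕ Fin n)} {i : Fin (2*n-1)}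
    (h : inl i ∈ blk0 n t ε T) :
    goodN n t.val i.val ∧
      ((i.val = 2*t.val+1 ∨ i.val = 2*t.val+2) → i.val = edgeN t.val ε) := by
  have ht2 : t.val ≤ n - 2 := by have := t.isLt; omega
  rcases mem_insert.mp h with h | h
  · have he : i.val = edgeN t.val ε := by
      have := congrArg (vval n) h
      simpa [vval, edgeV] using this
    refine ⟨?_, fun _ => he⟩
    rw [he]
    rcases edgeN_cases t.val ε with h' | h' <;> rw [h'] <;> unfold goodN <;> omega
  · obtain ⟨x, hx, hdx⟩ := mem_image.mp h
    cases x with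
    | inr p => exact absurd hdx (by simp [decV])
    | inl j =>
      have hiso : i.val = isoN t.val j.val := by
        have := congrArg (vval n) hdx
        simpa [vval, decV] using this.symm
      constructor
      · rw [hiso]
        exact isoN_good hn ht2 j.isLt
      · intro hcase
        exfalso
        have := isoN_ne_edge (t := t.val) (j := j.val)
        omega

lemma blk1_inl_facts {n : ℕ} (hn : 3 ≤ n) {t : Fin (n-1)} {ε : Bool}
    {T : Finset (Fin (n-2) ⊕ Fin n)} {i : Fin (2*n-1)}
    (h : inl i ∈ blk1 n t ε T) :
    goodN n t.val i.val ∧ i.val ≠ edgeN t.val ε := by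
  have ht2 : t.val ≤ n - 2 := by have := t.isLt; omega
  simp only [blk1, mem_sdiff, mem_univ, true_and, mem_union, not_or] at h
  obtain ⟨h0, h2⟩ := h
  have hnotS : ¬ inS3N n t.val i.val := by
    intro hs
    exact h2 ((mem_blk2 hn t).mpr (by simpa [vval] using hs))
  have hne : i.val ≠ edgeN t.val ε := by
    intro he
    apply h0
    have : (inl i : V n) = edgeV n t ε := by
      apply congrArg inl
      exact Fin.ext he
    rw [this]
    exact mem_insert_self _ _
  rcases coverN hn ht2 i.isLt with hS | h1' | h2' | ⟨j, hj, hjeq⟩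
  · exact absurd hS hnotS
  · exact ⟨by unfold goodN; omega, hne⟩
  · exact ⟨by unfold goodN; omega, hne⟩
  · exact ⟨hjeq ▸ isoN_good hn ht2 hj, hne⟩

-- ===== stability =====

lemma blk2_stable {n : ℕ} (hn : 3 ≤ n) (t : Fin (n-1)) :
    IsStableSet (squid n) (blk2 n t) := by
  have ht2 : t.val ≤ n - 2 := by have := t.isLt; omega
  intro v hv w hw hadj
  have hv' := (mem_blk2 hn t).mp hv
  have hw' := (mem_blk2 hn t).mp hw
  cases v with
  | inr p =>
    have := p.isLt
    simp only [vval, Sum.elim_inr] at hv'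
    unfold inS3N at hv'
    omega
  | inl i =>
    cases w with
    | inr q =>
      have := q.isLt
      simp only [vval, Sum.elim_inr] at hw'
      unfold inS3N at hw'
      omega
    | inl j =>
      simp only [vval, Sum.elim_inl] at hv' hw'
      exact inS3N_not_adj hn ht2 hv' hw' ((adj_inl_iff hn).mp hadj)

lemma blk0_stable {n : ℕ} (hn : 3 ≤ n) (t : Fin (n-1)) (ε : Bool)
    (T : Finset (Fin (n-2) ⊕ Fin n)) :
    IsStableSet (squid n) (blk0 n t ε T) := by
  have ht2 : t.val ≤ n - 2 := by have := t.isLt; omega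
  intro v hv w hw hadj
  cases v with
  | inr p =>
    cases w with
    | inr q => exact squid_adj_inr_inr p q hadj
    | inl i =>
      have h0 : i.val = 0 := adj_pend_iff.mp hadj.symm
      exact goodN_ne_zero (blk0_inl_facts hn hw).1 h0
  | inl i =>
    cases w with
    | inr q =>
      have h0 : i.val = 0 := adj_pend_iff.mp hadj
      exact goodN_ne_zero (blk0_inl_facts hn hv).1 h0
    | inl j =>
      have hi := blk0_inl_facts hn hv
      have hj := blk0_inl_facts hn hw
      refine goodN_not_adj hn ht2 hi.1 hj.1 ?_ ?_ ((adj_inl_iff hn).mp hadj)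
      · rintro ⟨e1, e2⟩
        have h1 := hi.2 (Or.inl e1)
        have h2 := hj.2 (Or.inr e2)
        omega
      · rintro ⟨e1, e2⟩
        have h1 := hj.2 (Or.inl e1)
        have h2 := hi.2 (Or.inr e2)
        omega

lemma blk1_stable {n : ℕ} (hn : 3 ≤ n) (t : Fin (n-1)) (ε : Bool)
    (T : Finset (Fin (n-2) ⊕ Fin n)) :
    IsStableSet (squid n) (blk1 n t ε T) := by
  have ht2 : t.val ≤ n - 2 := by have := t.isLt; omega
  intro v hv w hw hadj
  cases v with
  | inr p =>
    cases w with
    | inr q => exact squid_adj_inr_inr p q hadj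
    | inl i =>
      have h0 : i.val = 0 := adj_pend_iff.mp hadj.symm
      exact goodN_ne_zero (blk1_inl_facts hn hw).1 h0
  | inl i =>
    cases w with
    | inr q =>
      have h0 : i.val = 0 := adj_pend_iff.mp hadj
      exact goodN_ne_zero (blk1_inl_facts hn hv).1 h0
    | inl j =>
      have hi := blk1_inl_facts hn hv
      have hj := blk1_inl_facts hn hw
      have hEc := edgeN_cases t.val ε
      refine goodN_not_adj hn ht2 hi.1 hj.1 ?_ ?_ ((adj_inl_iff hn).mp hadj)
      · rintro ⟨e1, e2⟩
        have := hi.2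
        have := hj.2
        omega
      · rintro ⟨e1, e2⟩
        have := hi.2
        have := hj.2
        omega


-- ===== disjointness and coverage =====

lemma disj02 {n : ℕ} (hn : 3 ≤ n) (t : Fin (n-1)) (ε : Bool)
    (T : Finset (Fin (n-2) ⊕ Fin n)) :
    Disjoint (blk0 n t ε T) (blk2 n t) := by
  have ht2 : t.val ≤ n - 2 := by have := t.isLt; omega
  rw [disjoint_left]
  intro v hv hv2
  have hS := (mem_blk2 hn t).mp hv2
  cases v with
  | inr p =>
    have := p.isLt
    simp only [vval, Sum.elim_inr] at hS
    unfold inS3N at hS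
    omega
  | inl i =>
    simp only [vval, Sum.elim_inl] at hS
    exact good_not_inS3 hn ht2 (blk0_inl_facts hn hv).1 hS

lemma mem_blk1_iff {n : ℕ} {t : Fin (n-1)} {ε : Bool}
    {T : Finset (Fin (n-2) ⊕ Fin n)} {v : V n} :
    v ∈ blk1 n t ε T ↔ v ∉ blk0 n t ε T ∧ v ∉ blk2 n t := by
  simp only [blk1, mem_sdiff, mem_univ, true_and, mem_union, not_or]

-- ===== cardinalities =====

lemma s3map_inj {n : ℕ} (t : Fin (n-1)) : Function.Injective (s3map n t) := by
  intro a b h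
  unfold s3map at h
  have h2 : (if a.val ≤ t.val then 2*a.val else 2*a.val+1)
      = (if b.val ≤ t.val then 2*b.val else 2*b.val+1) := by
    have := congrArg (vval n) h
    simpa [vval] using this
  apply Fin.ext
  split at h2 <;> split at h2 <;> omega

lemma card_blk2 {n : ℕ} (hn : 3 ≤ n) (t : Fin (n-1)) : (blk2 n t).card = n - 1 := by
  rw [blk2, card_image_of_injective _ (s3map_inj t), card_univ, Fintype.card_fin]

lemma decV_inj {n : ℕ} (t : Fin (n-1)) : Function.Injective (decV n t) := by
  rintro (a|a) (b|b) h <;> simp only [decV] at h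
  · have h2 : isoN t.val a.val = isoN t.val b.val := by
      have := congrArg (vval n) h
      simpa [vval] using this
    exact congrArg inl (Fin.ext (isoN_inj h2))
  · exact absurd h (by simp)
  · exact absurd h (by simp)
  · exact congrArg inr (by injection h)

lemma edgeV_not_mem_image {n : ℕ} (hn : 3 ≤ n) (t : Fin (n-1)) (ε : Bool)
    (T : Finset (Fin (n-2) ⊕ Fin n)) :
    edgeV n t ε ∉ T.image (decV n t) := by
  intro h
  obtain ⟨x, hx, hdx⟩ := mem_image.mp h
  cases x with
  | inr p => exact absurd hdx (by simp [decV, edgeV])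
  | inl j =>
    have : isoN t.val j.val = edgeN t.val ε := by
      have := congrArg (vval n) hdx
      simpa [vval, decV, edgeV] using this
    have h2 := isoN_ne_edge (t := t.val) (j := j.val)
    have h3 := edgeN_cases t.val ε
    omega

lemma card_blk0 {n : ℕ} (hn : 3 ≤ n) (t : Fin (n-1)) (ε : Bool)
    {T : Finset (Fin (n-2) ⊕ Fin n)} (hT : T.card = n - 1) :
    (blk0 n t ε T).card = n := by
  rw [blk0, card_insert_of_notMem (edgeV_not_mem_image hn t ε T),
    card_image_of_injective _ (decV_inj t), hT]
  omega

lemma card_V {n : ℕ} : Fintype.card (V n) = 3*n - 1 := by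
  simp only [Fintype.card_sum, Fintype.card_fin]
  omega

lemma card_blk1 {n : ℕ} (hn : 3 ≤ n) (t : Fin (n-1)) (ε : Bool)
    {T : Finset (Fin (n-2) ⊕ Fin n)} (hT : T.card = n - 1) :
    (blk1 n t ε T).card = n := by
  rw [blk1, card_sdiff_of_subset (subset_univ _), card_union_of_disjoint (disj02 hn t ε T),
    card_blk0 hn t ε hT, card_blk2 hn t, card_univ, card_V]
  omega

-- ===== the encoding =====

def encodeB (n : ℕ) (t : Fin (n-1)) (ε : Bool) (T : Finset (Fin (n-2) ⊕ Fin n)) :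
    Fin 3 → Finset (V n) :=
  ![blk0 n t ε T, blk1 n t ε T, blk2 n t]

lemma encodeB_sos {n : ℕ} (hn : 3 ≤ n) (t : Fin (n-1)) (ε : Bool)
    {T : Finset (Fin (n-2) ⊕ Fin n)} (hT : T.card = n - 1) :
    SemiOrderedStable (squid n) [n, n, n-1] (encodeB n t ε T) := by
  refine ⟨?_, ?_, ?_, ?_⟩
  · intro i
    fin_cases i
    · exact blk0_stable hn t ε T
    · exact blk1_stable hn t ε T
    · exact blk2_stable hn t
  · have d01 : Disjoint (blk0 n t ε T) (blk1 n t ε T) := by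
      rw [disjoint_right]
      intro v hv
      exact (mem_blk1_iff.mp hv).1
    have d21 : Disjoint (blk2 n t) (blk1 n t ε T) := by
      rw [disjoint_right]
      intro v hv
      exact (mem_blk1_iff.mp hv).2
    have d02 := disj02 hn t ε T
    intro i j hij
    fin_cases i <;> fin_cases j <;>
      first
        | exact absurd rfl hij
        | exact d01
        | exact d01.symm
        | exact d21
        | exact d21.symm
        | exact d02
        | exact d02.symm
  · intro v
    by_cases h0 : v ∈ blk0 n t ε T
    · exact ⟨⟨0, by norm_num⟩, by simpa [encodeB] using h0⟩
    · by_cases h2 : v ∈ blk2 n t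
      · exact ⟨⟨2, by norm_num⟩, by simpa [encodeB] using h2⟩
      · exact ⟨⟨1, by norm_num⟩, by simpa [encodeB] using mem_blk1_iff.mpr ⟨h0, h2⟩⟩
  · intro i
    fin_cases i
    · exact card_blk0 hn t ε hT
    · exact card_blk1 hn t ε hT
    · exact card_blk2 hn t


-- ===== injectivity =====

lemma mem_blk0_decV_iff {n : ℕ} (hn : 3 ≤ n) (t : Fin (n-1)) (ε : Bool)
    (T : Finset (Fin (n-2) ⊕ Fin n)) (x : Fin (n-2) ⊕ Fin n) :
    decV n t x ∈ blk0 n t ε T ↔ x ∈ T := by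
  constructor
  · intro h
    rcases mem_insert.mp h with h | h
    · exfalso
      have ht2 : t.val ≤ n - 2 := by have := t.isLt; omega
      have hEc := edgeN_cases t.val ε
      cases x with
      | inr p =>
        have : 2*n-1+p.val = edgeN t.val ε := by
          have := congrArg (vval n) h
          simpa [vval, decV, edgeV] using this
        omega
      | inl j =>
        have : isoN t.val j.val = edgeN t.val ε := by
          have := congrArg (vval n) h
          simpa [vval, decV, edgeV] using this
        have h2 := isoN_ne_edge (t := t.val) (j := j.val)
        omega
    · obtain ⟨y, hy, hdy⟩ := mem_image.mp h
      rwa [decV_inj t hdy] at hy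
  · intro h
    exact mem_insert_of_mem (mem_image_of_mem _ h)

lemma e21_mem_blk0_iff {n : ℕ} (hn : 3 ≤ n) (t : Fin (n-1)) (ε : Bool)
    (T : Finset (Fin (n-2) ⊕ Fin n)) :
    (inl ⟨2*t.val+1, by have := t.isLt; omega⟩ : V n) ∈ blk0 n t ε T ↔ ε = true := by
  constructor
  · intro h
    rcases mem_insert.mp h with h | h
    · have : 2*t.val+1 = edgeN t.val ε := by
        have := congrArg (vval n) h
        simpa [vval, edgeV] using this
      cases ε
      · exfalso; unfold edgeN at this; simp at this
      · rfl
    · exfalso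
      obtain ⟨y, hy, hdy⟩ := mem_image.mp h
      cases y with
      | inr p => exact absurd hdy (by simp [decV])
      | inl j =>
        have : isoN t.val j.val = 2*t.val+1 := by
          have := congrArg (vval n) hdy
          simpa [vval, decV] using this
        have h2 := isoN_ne_edge (t := t.val) (j := j.val)
        omega
  · intro h
    subst h
    apply mem_insert_self

lemma encode_inj {n : ℕ} (hn : 3 ≤ n) (t t' : Fin (n-1)) (ε ε' : Bool)
    (T T' : Finset (Fin (n-2) ⊕ Fin n))
    (h : encodeB n t ε T = encodeB n t' ε' T') : t = t' ∧ ε = ε' ∧ T = T' := by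
  have h0 : blk0 n t ε T = blk0 n t' ε' T' := congrFun h 0
  have h2 : blk2 n t = blk2 n t' := congrFun h 2
  have htt : t = t' := by
    have key : ∀ (a b : Fin (n-1)), blk2 n a = blk2 n b → a.val ≤ b.val := by
      intro a b hab
      have hma : (inl ⟨2*a.val, by have := a.isLt; omega⟩ : V n) ∈ blk2 n a := by
        rw [mem_blk2 hn]
        show inS3N n a.val (2*a.val)
        unfold inS3N; omega
      rw [hab, mem_blk2 hn] at hma
      have : inS3N n b.val (2*a.val) := hma
      unfold inS3N at this
      omega
    exact Fin.ext (le_antisymm (key t t' h2) (key t' t h2.symm))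
  subst htt
  have hee : ε = ε' := by
    have := e21_mem_blk0_iff hn t ε T
    rw [h0, e21_mem_blk0_iff hn t ε' T'] at this
    cases ε <;> cases ε' <;> simp_all
  subst hee
  refine ⟨rfl, rfl, ?_⟩
  ext x
  rw [← mem_blk0_decV_iff hn t ε T x, ← mem_blk0_decV_iff hn t ε T' x, h0]


-- ===== surjectivity =====

lemma vval_inl {n : ℕ} (i : Fin (2*n-1)) : vval n (inl i) = i.val := rfl

lemma stable_block_sN {n : ℕ} (hn : 3 ≤ n) (s : Finset (V n))
    (hstab : IsStableSet (squid n) s)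
    (h0 : (inl ⟨0, by omega⟩ : V n) ∈ s) :
    (∀ i ∈ s.image (vval n), i < 2*n-1) ∧
    (∀ i ∈ s.image (vval n), ∀ j ∈ s.image (vval n),
      ¬(i + 1 = j) ∧ ¬(i = 2*n-2 ∧ j = 0)) ∧
    (0 ∈ s.image (vval n)) ∧ (s.image (vval n)).card = s.card := by
  have hnopend : ∀ p : Fin n, inr p ∉ s := by
    intro p hp
    exact hstab _ h0 _ hp (adj_pend_iff.mpr rfl)
  have hsub : ∀ i ∈ s.image (vval n), i < 2*n-1 := by
    intro i hi
    obtain ⟨v, hv, rfl⟩ := mem_image.mp hi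
    cases v with
    | inr p => exact absurd hv (hnopend p)
    | inl a => exact a.isLt
  refine ⟨hsub, ?_, ?_, card_image_of_injective _ vval_inj⟩
  · intro i hi j hj
    obtain ⟨v, hv, rfl⟩ := mem_image.mp hi
    obtain ⟨w, hw, rfl⟩ := mem_image.mp hj
    cases v with
    | inr p => exact absurd hv (hnopend p)
    | inl a =>
      cases w with
      | inr q => exact absurd hw (hnopend q)
      | inl b =>
        rw [vval_inl, vval_inl]
        constructor
        · intro hadj
          exact hstab _ hv _ hw ((adj_inl_iff hn).mpr (Or.inl hadj))
        · rintro ⟨ha, hb⟩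
          exact hstab _ hv _ hw ((adj_inl_iff hn).mpr (Or.inr (Or.inr (Or.inl ⟨ha, hb⟩))))
  · exact mem_image_of_mem _ h0

lemma stable_block_small {n : ℕ} (hn : 3 ≤ n) (s : Finset (V n))
    (hstab : IsStableSet (squid n) s)
    (h0 : (inl ⟨0, by omega⟩ : V n) ∈ s) : s.card ≤ n - 1 := by
  obtain ⟨hsub, hstabN, h0N, hcardN⟩ := stable_block_sN hn s hstab h0
  rw [← hcardN]
  exact stable_card_le n hn _ hsub hstabN h0N

lemma stable_block_char {n : ℕ} (hn : 3 ≤ n) (s : Finset (V n))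
    (hstab : IsStableSet (squid n) s)
    (h0 : (inl ⟨0, by omega⟩ : V n) ∈ s) (hcard : s.card = n - 1) :
    ∃ t : Fin (n-1), s = blk2 n t := by
  obtain ⟨hsub, hstabN, h0N, hcardN⟩ := stable_block_sN hn s hstab h0
  obtain ⟨t', ht', hform⟩ := stable_char n hn _ hsub hstabN h0N (by omega)
  have hnopend : ∀ p : Fin n, inr p ∉ s := by
    intro p hp
    exact hstab _ h0 _ hp (adj_pend_iff.mpr rfl)
  refine ⟨⟨t', by omega⟩, ?_⟩
  ext v
  rw [mem_blk2 hn]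
  cases v with
  | inr p =>
    have hp := p.isLt
    simp only [vval, Sum.elim_inr]
    constructor
    · intro h; exact absurd h (hnopend p)
    · intro h; unfold inS3N at h; omega
  | inl i =>
    rw [vval_inl]
    show inl i ∈ s ↔ inS3N n t' i.val
    rw [← hform]
    constructor
    · intro h
      exact mem_image_of_mem _ h
    · intro h
      obtain ⟨w, hw, hvw⟩ := mem_image.mp h
      have : w = inl i := vval_inj (by rw [hvw, vval_inl])
      rwa [this] at hw

lemma surj_step {n : ℕ} (hn : 3 ≤ n) (B : Fin 3 → Finset (V n))
    (hst : ∀ i, IsStableSet (squid n) (B i))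
    (hdisj : ∀ i j, i ≠ j → Disjoint (B i) (B j))
    (hcov : ∀ v : V n, ∃ i, v ∈ B i)
    (hc0 : (B 0).card = n)
    (t : Fin (n-1)) (ε : Bool)
    (hB2 : B 2 = blk2 n t)
    (hE : edgeV n t ε ∈ B 0)
    (hOnly : ∀ v ∈ B 0, vval n v ≠ edgeN t.val (!ε)) :
    ∃ T : Finset (Fin (n-2) ⊕ Fin n), T.card = n - 1 ∧ encodeB n t ε T = B := by
  classical
  have ht2 : t.val ≤ n - 2 := by have := t.isLt; omega
  set T : Finset (Fin (n-2) ⊕ Fin n) := univ.filter (fun x => decV n t x ∈ B 0) with hT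
  have himg : T.image (decV n t) = (B 0).erase (edgeV n t ε) := by
    ext v
    constructor
    · intro h
      obtain ⟨x, hx, hdx⟩ := mem_image.mp h
      rw [hT, mem_filter] at hx
      refine mem_erase.mpr ⟨?_, hdx ▸ hx.2⟩
      intro hve
      have hvv := congrArg (vval n) (hdx.trans hve)
      have hEc := edgeN_cases t.val ε
      cases x with
      | inr p =>
        simp only [vval, decV, edgeV, Sum.elim_inr, Sum.elim_inl] at hvv
        omega
      | inl j =>
        simp only [vval, decV, edgeV, Sum.elim_inl] at hvv
        have h2 := isoN_ne_edge (t := t.val) (j := j.val)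
        omega
    · intro h
      obtain ⟨hne, hv⟩ := mem_erase.mp h
      cases v with
      | inr p =>
        refine mem_image.mpr ⟨inr p, ?_, rfl⟩
        rw [hT, mem_filter]
        exact ⟨mem_univ _, hv⟩
      | inl i =>
        have hnotS : ¬ inS3N n t.val i.val := by
          intro hs
          have : inl i ∈ B 2 := by
            rw [hB2, mem_blk2 hn, vval_inl]
            exact hs
          exact (disjoint_left.mp (hdisj 0 2 (by decide)) hv) this
        rcases coverN hn ht2 i.isLt with hS | h1' | h2' | ⟨j, hj, hjeq⟩
        · exact absurd hS hnotS
        · exfalso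
          cases ε
          · exact hOnly _ hv (by rw [vval_inl, h1']; unfold edgeN; simp)
          · apply hne
            apply congrArg inl
            apply Fin.ext
            rw [h1']
            rfl
        · exfalso
          cases ε
          · apply hne
            apply congrArg inl
            apply Fin.ext
            rw [h2']
            rfl
          · exact hOnly _ hv (by rw [vval_inl, h2']; unfold edgeN; simp)
        · refine mem_image.mpr ⟨inl ⟨j, hj⟩, ?_, ?_⟩
          · rw [hT, mem_filter]
            refine ⟨mem_univ _, ?_⟩
            have : decV n t (inl ⟨j, hj⟩) = inl i := by
              apply congrArg inl
              apply Fin.ext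
              exact hjeq
            rw [this]
            exact hv
          · apply congrArg inl
            apply Fin.ext
            exact hjeq
  have hTcard : T.card = n - 1 := by
    have h1 : (T.image (decV n t)).card = T.card := card_image_of_injective _ (decV_inj t)
    rw [himg, card_erase_of_mem hE, hc0] at h1
    omega
  have hB0 : blk0 n t ε T = B 0 := by
    rw [blk0, himg, insert_erase hE]
  have hB1 : blk1 n t ε T = B 1 := by
    ext v
    rw [mem_blk1_iff, hB0, ← hB2]
    constructor
    · rintro ⟨hv0, hv2⟩
      obtain ⟨k, hk⟩ := hcov v
      fin_cases k
      · exact absurd hk hv0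
      · exact hk
      · exact absurd hk hv2
    · intro hv
      exact ⟨disjoint_left.mp (hdisj 1 0 (by decide)) hv,
        disjoint_left.mp (hdisj 1 2 (by decide)) hv⟩
  refine ⟨T, hTcard, ?_⟩
  funext k
  fin_cases k
  · exact hB0
  · exact hB1
  · exact hB2.symm

lemma encode_surj {n : ℕ} (hn : 3 ≤ n) (B : Fin 3 → Finset (V n))
    (hst : ∀ i, IsStableSet (squid n) (B i))
    (hdisj : ∀ i j, i ≠ j → Disjoint (B i) (B j))
    (hcov : ∀ v : V n, ∃ i, v ∈ B i)
    (hc0 : (B 0).card = n) (hc1 : (B 1).card = n) (hc2 : (B 2).card = n - 1) :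
    ∃ t ε T, T.card = n - 1 ∧ encodeB n t ε T = B := by
  have h02 : (inl ⟨0, by omega⟩ : V n) ∈ B 2 := by
    obtain ⟨k, hk⟩ := hcov (inl ⟨0, by omega⟩)
    have hkcard : (B k).card = n ∨ k = 2 := by
      fin_cases k
      · exact Or.inl hc0
      · exact Or.inl hc1
      · exact Or.inr rfl
    rcases hkcard with h | h
    · exfalso
      have := stable_block_small hn (B k) (hst k) hk
      omega
    · rwa [h] at hk
  obtain ⟨t, hB2⟩ := stable_block_char hn (B 2) (hst 2) h02 hc2
  have ht2 : t.val ≤ n - 2 := by have := t.isLt; omega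
  set e1 : V n := inl ⟨2*t.val+1, by omega⟩ with he1def
  set e2 : V n := inl ⟨2*t.val+2, by omega⟩ with he2def
  have he1n2 : e1 ∉ B 2 := by
    rw [hB2, mem_blk2 hn]
    show ¬ inS3N n t.val (2*t.val+1)
    unfold inS3N; omega
  have he2n2 : e2 ∉ B 2 := by
    rw [hB2, mem_blk2 hn]
    show ¬ inS3N n t.val (2*t.val+2)
    unfold inS3N; omega
  have hadj12 : (squid n).Adj e1 e2 := by
    rw [he1def, he2def, adj_inl_iff hn]
    exact Or.inl rfl
  have mem01 : ∀ v : V n, v ∉ B 2 → v ∈ B 0 ∨ v ∈ B 1 := by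
    intro v hv
    obtain ⟨k, hk⟩ := hcov v
    fin_cases k
    · exact Or.inl hk
    · exact Or.inr hk
    · exact absurd hk hv
  rcases mem01 e1 he1n2 with h1 | h1
  · -- ε = true
    have hE : edgeV n t true ∈ B 0 := by
      have : edgeV n t true = e1 := by
        apply congrArg inl
        apply Fin.ext
        show edgeN t.val true = 2*t.val+1
        unfold edgeN; simp
      rwa [this]
    have he2B0 : e2 ∉ B 0 := fun h => hst 0 _ h1 _ h hadj12
    have hOnly : ∀ v ∈ B 0, vval n v ≠ edgeN t.val (!true) := by
      intro v hv hvv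
      apply he2B0
      have : v = e2 := by
        apply vval_inj
        rw [hvv, he2def, vval_inl]
        unfold edgeN; simp
      rwa [← this]
    obtain ⟨T, hT, hTe⟩ := surj_step hn B hst hdisj hcov hc0 t true hB2 hE hOnly
    exact ⟨t, true, T, hT, hTe⟩
  · -- ε = false
    have he1B0 : e1 ∉ B 0 := disjoint_left.mp (hdisj 1 0 (by decide)) h1
    have h2B0 : e2 ∈ B 0 := by
      rcases mem01 e2 he2n2 with h | h
      · exact h
      · exact absurd hadj12 (hst 1 _ h1 _ h)
    have hE : edgeV n t false ∈ B 0 := by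
      have : edgeV n t false = e2 := by
        apply congrArg inl
        apply Fin.ext
        show edgeN t.val false = 2*t.val+2
        unfold edgeN; simp
      rwa [this]
    have hOnly : ∀ v ∈ B 0, vval n v ≠ edgeN t.val (!false) := by
      intro v hv hvv
      apply he1B0
      have : v = e1 := by
        apply vval_inj
        rw [hvv, he1def, vval_inl]
        unfold edgeN; simp
      rwa [← this]
    obtain ⟨T, hT, hTe⟩ := surj_step hn B hst hdisj hcov hc0 t false hB2 hE hOnly
    exact ⟨t, false, T, hT, hTe⟩


end SquidAux

set_option maxHeartbeats 2000000 in
theorem squid_aTilde_nnn (n : ℕ) (hn : 3 ≤ n) :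
    aTilde (squid n) [n, n, n - 1] = 2 * (n - 1) * Nat.choose (2 * n - 2) (n - 1) := by
  classical
  have key : Nat.card (Fin (n-1) × Bool × {T : Finset (Fin (n-2) ⊕ Fin n) // T.card = n - 1})
      = Nat.card {B : Fin ([n,n,n-1] : List ℕ).length → Finset (SquidAux.V n) //
          SemiOrderedStable (squid n) [n,n,n-1] B} := by
    apply Nat.card_eq_of_bijective
      (f := fun (x : Fin (n-1) × Bool × {T : Finset (Fin (n-2) ⊕ Fin n) // T.card = n - 1}) => (⟨SquidAux.encodeB n x.1 x.2.1 x.2.2.1,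
        SquidAux.encodeB_sos hn x.1 x.2.1 x.2.2.2⟩ :
        {B : Fin ([n,n,n-1] : List ℕ).length → Finset (SquidAux.V n) //
          SemiOrderedStable (squid n) [n,n,n-1] B}))
    constructor
    · rintro ⟨t, ε, T, hT⟩ ⟨t', ε', T', hT'⟩ h
      obtain ⟨ht, hε, hTT⟩ := SquidAux.encode_inj hn t t' ε ε' T T'
        (congrArg Subtype.val h)
      subst ht
      subst hε
      subst hTT
      rfl
    · rintro ⟨B, hst, hdisj, hcov, hcard⟩
      obtain ⟨t, ε, T, hT, hTe⟩ := SquidAux.encode_surj hn B hst hdisj hcov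
        (hcard ⟨0, by norm_num⟩) (hcard ⟨1, by norm_num⟩) (hcard ⟨2, by norm_num⟩)
      exact ⟨⟨t, ε, T, hT⟩, Subtype.ext hTe⟩
  rw [aTilde, ← key, Nat.card_eq_fintype_card, Fintype.card_prod, Fintype.card_prod,
    Fintype.card_fin, Fintype.card_bool, Fintype.card_finset_len]
  have hcs : Fintype.card (Fin (n-2) ⊕ Fin n) = 2*n-2 := by
    simp only [Fintype.card_sum, Fintype.card_fin]
    omega
  rw [hcs]
  ring
end

section
/- For every integer n ≥ 3, the number of semi-ordered stable partitions of the squid graph Sq(2n−1;1^n) of type (n+1,n−1,n−1) equals 4(n−1)·binomial(2n−2, n). -/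
namespace SquidWork
variable (q : ℕ)

abbrev Vt := Fin (2*q+5) ⊕ Fin (q+3)

def G : SimpleGraph (Vt q) := squid (q+3)

lemma adj_inl_inl (i j : Fin (2*q+5)) :
    (G q).Adj (Sum.inl i) (Sum.inl j) ↔
      (j.val = i.val+1 ∨ i.val = j.val+1 ∨ (i.val = 2*q+4 ∧ j.val = 0) ∨
        (j.val = 2*q+4 ∧ i.val = 0)) := by
  have hi := i.isLt
  have hj := j.isLt
  have key : ∀ a b : ℕ, a < 2*q+5 → b < 2*q+5 →
      ((a+1) % (2*q+5) = b ↔ (b = a+1 ∨ (a = 2*q+4 ∧ b = 0))) := by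
    intro a b ha hb
    rcases Nat.lt_or_ge (a+1) (2*q+5) with h | h
    · rw [Nat.mod_eq_of_lt h]
      constructor <;> intro <;> omega
    · have h2 : a = 2*q+4 := by omega
      subst h2
      rw [show (2*q+4+1 : ℕ) = 2*q+5 from rfl, Nat.mod_self]
      constructor <;> intro <;> omega
  show (Sum.inl i ≠ Sum.inl j ∧
      ((i.val+1) % (2*q+5) = j.val ∨ (j.val+1) % (2*q+5) = i.val)) ↔ _
  rw [key i.val j.val hi hj, key j.val i.val hj hi]
  simp only [Ne, Sum.inl.injEq, Fin.ext_iff]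
  constructor
  · rintro ⟨h1, h2⟩
    omega
  · intro h
    exact ⟨by omega, by omega⟩

lemma adj_inl_inr (i : Fin (2*q+5)) (p : Fin (q+3)) :
    (G q).Adj (Sum.inl i) (Sum.inr p) ↔ i.val = 0 := by
  show (Sum.inl i ≠ Sum.inr p ∧ (i.val = 0 ∨ False)) ↔ _
  simp

lemma adj_inr_inr (p r : Fin (q+3)) :
    ¬ (G q).Adj (Sum.inr p) (Sum.inr r) := by
  show ¬ (Sum.inr p ≠ Sum.inr r ∧ (False ∨ False))
  simp

def vC (a : ℕ) : Vt q := Sum.inl ⟨a % (2*q+5), Nat.mod_lt _ (by omega)⟩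
def vP (a : ℕ) : Vt q := Sum.inr ⟨a % (q+3), Nat.mod_lt _ (by omega)⟩

lemma vC_eq_inl {a : ℕ} (h : a < 2*q+5) (i : Fin (2*q+5)) :
    vC q a = Sum.inl i ↔ i.val = a := by
  simp [vC, Fin.ext_iff, Nat.mod_eq_of_lt h, eq_comm]

lemma vC_ne_inr (a : ℕ) (p : Fin (q+3)) : vC q a ≠ Sum.inr p := by
  simp [vC]

lemma vP_eq_inr {a : ℕ} (h : a < q+3) (p : Fin (q+3)) :
    vP q a = Sum.inr p ↔ p.val = a := by
  simp [vP, Fin.ext_iff, Nat.mod_eq_of_lt h, eq_comm]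

lemma adj_vC_vC {a b : ℕ} (ha : a < 2*q+5) (hb : b < 2*q+5) :
    (G q).Adj (vC q a) (vC q b) ↔
      (b = a+1 ∨ a = b+1 ∨ (a = 2*q+4 ∧ b = 0) ∨ (b = 2*q+4 ∧ a = 0)) := by
  show (G q).Adj (Sum.inl ⟨a % (2*q+5), _⟩) (Sum.inl ⟨b % (2*q+5), _⟩) ↔ _
  rw [adj_inl_inl]
  simp [Nat.mod_eq_of_lt ha, Nat.mod_eq_of_lt hb]

lemma adj_vC_inr {a : ℕ} (ha : a < 2*q+5) (p : Fin (q+3)) :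
    (G q).Adj (vC q a) (Sum.inr p) ↔ a = 0 := by
  show (G q).Adj (Sum.inl ⟨a % (2*q+5), _⟩) (Sum.inr p) ↔ _
  rw [adj_inl_inr]
  simp [Nat.mod_eq_of_lt ha]

def sF (t k : ℕ) : ℕ := if k < t then 2*k+2 else 2*k+3
def fF (t k : ℕ) : ℕ := if k < t then 2*k+1 else 2*k+4
def pr (t : ℕ) (s : Bool) : ℕ := if s then 2*t+1 else 2*t+2

lemma sF_lt (t k : ℕ) (hk : k ≤ q) : sF t k < 2*q+5 := by
  unfold sF; split <;> omega

lemma fF_lt (t k : ℕ) (hk : k ≤ q) : fF t k < 2*q+5 := by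
  unfold fF; split <;> omega

lemma sF_ex {t : ℕ} (ht : t ≤ q+1) (v : ℕ) :
    (∃ k, k ≤ q ∧ sF t k = v) ↔
      ((v % 2 = 0 ∧ 2 ≤ v ∧ v ≤ 2*t) ∨ (v % 2 = 1 ∧ 2*t+3 ≤ v ∧ v ≤ 2*q+3)) := by
  constructor
  · rintro ⟨k, hk, rfl⟩
    unfold sF; split <;> omega
  · rintro (⟨h1, h2, h3⟩ | ⟨h1, h2, h3⟩)
    · refine ⟨v/2 - 1, by omega, ?_⟩
      have hlt : v/2 - 1 < t := by omega
      simp only [sF, if_pos hlt]; omega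
    · refine ⟨(v-3)/2, by omega, ?_⟩
      have hlt : ¬ ((v-3)/2 < t) := by omega
      simp only [sF, if_neg hlt]; omega

lemma fF_ex {t : ℕ} (ht : t ≤ q+1) (v : ℕ) :
    (∃ k, k ≤ q ∧ fF t k = v) ↔
      ((v % 2 = 1 ∧ v < 2*t) ∨ (v % 2 = 0 ∧ 2*t+4 ≤ v ∧ v ≤ 2*q+4)) := by
  constructor
  · rintro ⟨k, hk, rfl⟩
    unfold fF; split <;> omega
  · rintro (⟨h1, h2⟩ | ⟨h1, h2, h3⟩)
    · refine ⟨(v-1)/2, by omega, ?_⟩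
      have hlt : (v-1)/2 < t := by omega
      simp only [fF, if_pos hlt]; omega
    · refine ⟨(v-4)/2, by omega, ?_⟩
      have hlt : ¬ ((v-4)/2 < t) := by omega
      simp only [fF, if_neg hlt]; omega

def wl (k : ℕ) : Fin (2*q+4) := ⟨k % (2*q+4), Nat.mod_lt _ (by omega)⟩
def wh (p : Fin (q+3)) : Fin (2*q+4) := ⟨q+1+p.val, by omega⟩

lemma wl_val {k : ℕ} (h : k < 2*q+4) : (wl q k).val = k := Nat.mod_eq_of_lt h

def decode (t : ℕ) (w : Fin (2*q+4)) : Vt q :=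
  if w.val ≤ q then vC q (fF t w.val) else vP q (w.val - (q+1))

def BU (t : ℕ) : Finset (Vt q) :=
  insert (vC q 0) ((Finset.range (q+1)).image (fun k => vC q (sF t k)))

def BZ (t x : ℕ) (W : Finset (Fin (2*q+4))) : Finset (Vt q) :=
  insert (vC q x) (W.image (decode q t))

lemma decode_wl {t k : ℕ} (hk : k ≤ q) : decode q t (wl q k) = vC q (fF t k) := by
  have h : (wl q k).val = k := wl_val q (by omega)
  unfold decode; rw [h, if_pos hk]

lemma decode_wh (t : ℕ) (p : Fin (q+3)) : decode q t (wh q p) = Sum.inr p := by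
  unfold decode wh
  rw [if_neg (by simp; omega)]
  simp only
  rw [show q+1+p.val - (q+1) = p.val by omega]
  unfold vP
  simp [Fin.ext_iff, Nat.mod_eq_of_lt p.isLt]

lemma mem_BU_inl {t : ℕ} (ht : t ≤ q+1) (i : Fin (2*q+5)) :
    Sum.inl i ∈ BU q t ↔ (i.val = 0 ∨ (∃ k, k ≤ q ∧ sF t k = i.val)) := by
  unfold BU
  rw [Finset.mem_insert, Finset.mem_image]
  constructor
  · rintro (h | ⟨k, hk, hvk⟩)
    · left; exact ((vC_eq_inl q (by omega) i).mp h.symm)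
    · right
      rw [Finset.mem_range] at hk
      exact ⟨k, by omega, ((vC_eq_inl q (sF_lt q t k (by omega)) i).mp hvk).symm⟩
  · rintro (h | ⟨k, hk, hvk⟩)
    · left; exact ((vC_eq_inl q (by omega) i).mpr h).symm
    · right; exact ⟨k, Finset.mem_range.mpr (by omega),
        (vC_eq_inl q (sF_lt q t k hk) i).mpr hvk.symm⟩

lemma mem_BU_inr (t : ℕ) (p : Fin (q+3)) : Sum.inr p ∉ BU q t := by
  unfold BU
  rw [Finset.mem_insert, Finset.mem_image]
  rintro (h | ⟨k, _, hvk⟩)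
  · exact vC_ne_inr q 0 p h.symm
  · exact vC_ne_inr q _ p hvk

lemma mem_BZ_inl (t x : ℕ) (W : Finset (Fin (2*q+4))) (i : Fin (2*q+5)) (hx : x < 2*q+5) :
    Sum.inl i ∈ BZ q t x W ↔
      (i.val = x ∨ ∃ k, k ≤ q ∧ wl q k ∈ W ∧ fF t k = i.val) := by
  unfold BZ
  rw [Finset.mem_insert, Finset.mem_image]
  constructor
  · rintro (h | ⟨w, hw, hvw⟩)
    · left; exact (vC_eq_inl q hx i).mp h.symm
    · right
      unfold decode at hvw
      by_cases hwq : w.val ≤ q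
      · rw [if_pos hwq] at hvw
        refine ⟨w.val, hwq, ?_, ((vC_eq_inl q (fF_lt q t w.val hwq) i).mp hvw).symm⟩
        have : wl q w.val = w := Fin.ext (wl_val q (by omega))
        rwa [this]
      · rw [if_neg hwq] at hvw
        exact absurd hvw (by unfold vP; simp)
  · rintro (h | ⟨k, hk, hkW, hvk⟩)
    · left; exact ((vC_eq_inl q hx i).mpr h).symm
    · right
      exact ⟨wl q k, hkW, by rw [decode_wl q hk]; exact (vC_eq_inl q (fF_lt q t k hk) i).mpr hvk.symm⟩

lemma mem_BZ_inr (t x : ℕ) (W : Finset (Fin (2*q+4))) (p : Fin (q+3)) :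
    Sum.inr p ∈ BZ q t x W ↔ wh q p ∈ W := by
  unfold BZ
  rw [Finset.mem_insert, Finset.mem_image]
  constructor
  · rintro (h | ⟨w, hw, hvw⟩)
    · exact absurd h.symm (vC_ne_inr q x p)
    · unfold decode at hvw
      by_cases hwq : w.val ≤ q
      · rw [if_pos hwq] at hvw
        exact absurd hvw (vC_ne_inr q _ p)
      · rw [if_neg hwq] at hvw
        have hpv : p.val = w.val - (q+1) := by
          have := (vP_eq_inr q (by omega) p).mp hvw
          omega
        have : wh q p = w := Fin.ext (by unfold wh; simp; omega)
        rwa [this]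
  · intro h
    right
    exact ⟨wh q p, h, decode_wh q t p⟩

lemma vC_inj {a b : ℕ} (ha : a < 2*q+5) (hb : b < 2*q+5) (h : vC q a = vC q b) : a = b := by
  unfold vC at h
  simp only [Sum.inl.injEq, Fin.ext_iff] at h
  rwa [Nat.mod_eq_of_lt ha, Nat.mod_eq_of_lt hb] at h

lemma sF_fact (t k : ℕ) : (k < t ∧ sF t k = 2*k+2) ∨ (t ≤ k ∧ sF t k = 2*k+3) := by
  unfold sF; split <;> omega

lemma fF_fact (t k : ℕ) : (k < t ∧ fF t k = 2*k+1) ∨ (t ≤ k ∧ fF t k = 2*k+4) := by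
  unfold fF; split <;> omega

lemma sF_inj {t k k' : ℕ} (h : sF t k = sF t k') : k = k' := by
  have h1 := sF_fact t k; have h2 := sF_fact t k'; omega

lemma fF_inj {t k k' : ℕ} (h : fF t k = fF t k') : k = k' := by
  have h1 := fF_fact t k; have h2 := fF_fact t k'; omega

lemma pr_fact (t : ℕ) (s : Bool) : pr t s = 2*t+1 ∨ pr t s = 2*t+2 := by
  unfold pr; cases s <;> simp

lemma pr_lt {t : ℕ} (ht : t ≤ q+1) (s : Bool) : pr t s < 2*q+5 := by
  have := pr_fact t s; omega

lemma decode_inj {t : ℕ} (ht : t ≤ q+1) : Function.Injective (decode q t) := by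
  intro w w' h
  unfold decode at h
  by_cases h1 : w.val ≤ q <;> by_cases h2 : w'.val ≤ q <;>
    simp only [h1, h2, if_pos, if_neg, if_true, if_false] at h
  · exact Fin.ext (fF_inj (vC_inj q (fF_lt q t _ h1) (fF_lt q t _ h2) h))
  · exact absurd h (by unfold vC vP; simp)
  · exact absurd h (by unfold vC vP; simp)
  · unfold vP at h
    simp only [Sum.inr.injEq, Fin.ext_iff] at h
    have hw := w.isLt; have hw' := w'.isLt
    rw [Nat.mod_eq_of_lt (by omega), Nat.mod_eq_of_lt (by omega)] at h
    exact Fin.ext (by omega)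

lemma card_BU {t : ℕ} (ht : t ≤ q+1) : (BU q t).card = q+2 := by
  unfold BU
  rw [Finset.card_insert_of_notMem, Finset.card_image_of_injOn, Finset.card_range]
  · intro k hk k' hk' h
    simp only [Finset.mem_coe, Finset.mem_range] at hk hk'
    exact sF_inj (vC_inj q (sF_lt q t k (by omega)) (sF_lt q t k' (by omega)) h)
  · rw [Finset.mem_image]
    rintro ⟨k, hk, h⟩
    rw [Finset.mem_range] at hk
    have := vC_inj q (sF_lt q t k (by omega)) (by omega) h
    have := sF_fact t k
    omega

lemma card_BZ {t x : ℕ} (ht : t ≤ q+1) (hx : x = 2*t+1 ∨ x = 2*t+2)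
    (W : Finset (Fin (2*q+4))) : (BZ q t x W).card = W.card + 1 := by
  unfold BZ
  rw [Finset.card_insert_of_notMem, Finset.card_image_of_injective _ (decode_inj q ht)]
  rw [Finset.mem_image]
  rintro ⟨w, hw, h⟩
  unfold decode at h
  by_cases h1 : w.val ≤ q
  · rw [if_pos h1] at h
    have := vC_inj q (fF_lt q t _ h1) (by omega) h
    have := fF_fact t w.val
    omega
  · rw [if_neg h1] at h
    exact absurd h (by unfold vC vP; simp)

lemma adj_inr_inl (i : Fin (2*q+5)) (p : Fin (q+3)) :
    (G q).Adj (Sum.inr p) (Sum.inl i) ↔ i.val = 0 := by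
  rw [SimpleGraph.adj_comm]; exact adj_inl_inr q i p

lemma stable_BU {t : ℕ} (ht : t ≤ q+1) : IsStableSet (G q) (BU q t) := by
  rintro (i | p) hv (j | p') hw hadj
  · rw [mem_BU_inl q ht] at hv hw
    rw [adj_inl_inl] at hadj
    obtain (h1 | ⟨k, hk, hsk⟩) := hv <;> obtain (h2 | ⟨k', hk', hsk'⟩) := hw <;>
      [skip; (have := sF_fact t k'); (have := sF_fact t k);
       (have := sF_fact t k; have := sF_fact t k')] <;> omega
  · exact mem_BU_inr q t p' hw
  · exact mem_BU_inr q t p hv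
  · exact mem_BU_inr q t p hv

lemma stable_BZ {t x : ℕ} (ht : t ≤ q+1) (hx : x = 2*t+1 ∨ x = 2*t+2)
    (W : Finset (Fin (2*q+4))) : IsStableSet (G q) (BZ q t x W) := by
  have hxlt : x < 2*q+5 := by omega
  rintro (i | p) hv (j | p') hw hadj
  · rw [mem_BZ_inl q t x W _ hxlt] at hv hw
    rw [adj_inl_inl] at hadj
    obtain (h1 | ⟨k, hk, _, hsk⟩) := hv <;> obtain (h2 | ⟨k', hk', _, hsk'⟩) := hw <;>
      [skip; (have := fF_fact t k'); (have := fF_fact t k);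
       (have := fF_fact t k; have := fF_fact t k')] <;> omega
  · rw [mem_BZ_inl q t x W _ hxlt] at hv
    rw [adj_inl_inr] at hadj
    obtain (h1 | ⟨k, hk, _, hsk⟩) := hv
    · omega
    · have := fF_fact t k; omega
  · rw [mem_BZ_inl q t x W _ hxlt] at hw
    rw [adj_inr_inl] at hadj
    obtain (h1 | ⟨k, hk, _, hsk⟩) := hw
    · omega
    · have := fF_fact t k; omega
  · exact (adj_inr_inr q p p') hadj

lemma disj_BU_BZ {t x : ℕ} (ht : t ≤ q+1) (hx : x = 2*t+1 ∨ x = 2*t+2)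
    (W : Finset (Fin (2*q+4))) : Disjoint (BU q t) (BZ q t x W) := by
  rw [Finset.disjoint_left]
  rintro (i | p) h1 h2
  · rw [mem_BU_inl q ht] at h1
    rw [mem_BZ_inl q t x W _ (by omega)] at h2
    obtain (g1 | ⟨k, hk, hsk⟩) := h1 <;> obtain (g2 | ⟨k', hk', _, hsk'⟩) := h2 <;>
      [skip; (have := fF_fact t k'); (have := sF_fact t k);
       (have := sF_fact t k; have := fF_fact t k')] <;> omega
  · exact mem_BU_inr q t p h1

lemma disj_BZ_BZ {t : ℕ} (ht : t ≤ q+1) (s : Bool) (W : Finset (Fin (2*q+4))) :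
    Disjoint (BZ q t (pr t s) W) (BZ q t (pr t (!s)) Wᶜ) := by
  rw [Finset.disjoint_left]
  rintro (i | p) h1 h2
  · rw [mem_BZ_inl q t _ _ _ (pr_lt q ht s)] at h1
    rw [mem_BZ_inl q t _ _ _ (pr_lt q ht (!s))] at h2
    obtain (g1 | ⟨k, hk, hkW, hsk⟩) := h1 <;> obtain (g2 | ⟨k', hk', hkW', hsk'⟩) := h2
    · cases s <;> simp [pr] at g1 g2 <;> omega
    · have := fF_fact t k'; have := pr_fact t s; have := pr_fact t (!s)
      cases s <;> simp [pr] at g1 <;> omega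
    · have := fF_fact t k; have := pr_fact t (!s)
      cases s <;> simp [pr] at g2 <;> omega
    · have : k = k' := fF_inj (t := t) (by omega)
      subst this
      rw [Finset.mem_compl] at hkW'
      exact hkW' hkW
  · rw [mem_BZ_inr] at h1 h2
    rw [Finset.mem_compl] at h2
    exact h2 h1

lemma cover_Phi {t : ℕ} (ht : t ≤ q+1) (s : Bool) (W : Finset (Fin (2*q+4))) :
    ∀ v : Vt q, v ∈ BU q t ∨ v ∈ BZ q t (pr t s) W ∨ v ∈ BZ q t (pr t (!s)) Wᶜ := by
  rintro (i | p)
  · by_cases h0 : i.val = 0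
    · exact Or.inl ((mem_BU_inl q ht i).mpr (Or.inl h0))
    by_cases hsv : (i.val % 2 = 0 ∧ 2 ≤ i.val ∧ i.val ≤ 2*t) ∨
        (i.val % 2 = 1 ∧ 2*t+3 ≤ i.val ∧ i.val ≤ 2*q+3)
    · exact Or.inl ((mem_BU_inl q ht i).mpr (Or.inr ((sF_ex q ht i.val).mpr hsv)))
    by_cases hp1 : i.val = pr t s
    · exact Or.inr (Or.inl ((mem_BZ_inl q t _ W i (pr_lt q ht s)).mpr (Or.inl hp1)))
    by_cases hp2 : i.val = pr t (!s)
    · exact Or.inr (Or.inr ((mem_BZ_inl q t _ Wᶜ i (pr_lt q ht (!s))).mpr (Or.inl hp2)))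
    have hfv : (i.val % 2 = 1 ∧ i.val < 2*t) ∨
        (i.val % 2 = 0 ∧ 2*t+4 ≤ i.val ∧ i.val ≤ 2*q+4) := by
      have hi := i.isLt
      cases s <;> simp [pr] at hp1 hp2 <;> omega
    obtain ⟨k, hk, hfk⟩ := (fF_ex q ht i.val).mpr hfv
    by_cases hkW : wl q k ∈ W
    · exact Or.inr (Or.inl ((mem_BZ_inl q t _ W i (pr_lt q ht s)).mpr
        (Or.inr ⟨k, hk, hkW, hfk⟩)))
    · exact Or.inr (Or.inr ((mem_BZ_inl q t _ Wᶜ i (pr_lt q ht (!s))).mpr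
        (Or.inr ⟨k, hk, Finset.mem_compl.mpr hkW, hfk⟩)))
  · by_cases hpW : wh q p ∈ W
    · exact Or.inr (Or.inl ((mem_BZ_inr q t _ W p).mpr hpW))
    · exact Or.inr (Or.inr ((mem_BZ_inr q t _ Wᶜ p).mpr (Finset.mem_compl.mpr hpW)))

def Phi (b s : Bool) (t : ℕ) (W : Finset (Fin (2*q+4))) : Fin 3 → Finset (Vt q) :=
  fun i => if i.val = 0 then BZ q t (pr t s) W
           else if i.val = (if b then 1 else 2) then BU q t
           else BZ q t (pr t (!s)) Wᶜ

lemma sos_Phi (b s : Bool) {t : ℕ} (ht : t ≤ q+1) {W : Finset (Fin (2*q+4))}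
    (hW : W.card = q+3) :
    SemiOrderedStable (G q) [q+4, q+2, q+2] (Phi q b s t W) := by
  have hcW : Wᶜ.card = q+1 := by
    rw [Finset.card_compl, hW, Fintype.card_fin]
    omega
  refine ⟨?_, ?_, ?_, ?_⟩
  · intro i
    fin_cases i
    · exact stable_BZ q ht (pr_fact t s) W
    · cases b
      · exact stable_BZ q ht (pr_fact t (!s)) Wᶜ
      · exact stable_BU q ht
    · cases b
      · exact stable_BU q ht
      · exact stable_BZ q ht (pr_fact t (!s)) Wᶜ
  · intro i j hij
    fin_cases i <;> fin_cases j <;> (try exact absurd rfl hij) <;> cases b <;>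
      first
      | exact disj_BU_BZ q ht (pr_fact t s) W
      | exact disj_BU_BZ q ht (pr_fact t (!s)) Wᶜ
      | exact (disj_BU_BZ q ht (pr_fact t s) W).symm
      | exact (disj_BU_BZ q ht (pr_fact t (!s)) Wᶜ).symm
      | exact disj_BZ_BZ q ht s W
      | exact (disj_BZ_BZ q ht s W).symm
  · intro v
    rcases cover_Phi q ht s W v with h | h | h
    · cases b
      · exact ⟨⟨2, by simp⟩, h⟩
      · exact ⟨⟨1, by simp⟩, h⟩
    · exact ⟨⟨0, by simp⟩, h⟩
    · cases b
      · exact ⟨⟨1, by simp⟩, h⟩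
      · exact ⟨⟨2, by simp⟩, h⟩
  · intro i
    fin_cases i
    · show (BZ q t (pr t s) W).card = q+4
      rw [card_BZ q ht (pr_fact t s) W, hW]
    · cases b
      · show (BZ q t (pr t (!s)) Wᶜ).card = q+2
        rw [card_BZ q ht (pr_fact t (!s)) Wᶜ, hcW]
      · show (BU q t).card = q+2
        exact card_BU q ht
    · cases b
      · show (BU q t).card = q+2
        exact card_BU q ht
      · show (BZ q t (pr t (!s)) Wᶜ).card = q+2
        rw [card_BZ q ht (pr_fact t (!s)) Wᶜ, hcW]

lemma cycle_bound (A : Finset ℕ) (hA : ∀ a ∈ A, a < 2*q+5)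
    (h : ∀ a ∈ A, ∀ b ∈ A, ¬(b = a+1 ∨ (a = 2*q+4 ∧ b = 0))) : A.card ≤ q+2 := by
  set nx : ℕ → ℕ := fun a => if a = 2*q+4 then 0 else a+1 with hnx
  have hdisj : Disjoint A (A.image nx) := by
    rw [Finset.disjoint_right]
    intro x hx hxA
    rw [Finset.mem_image] at hx
    obtain ⟨a, ha, rfl⟩ := hx
    by_cases h4 : a = 2*q+4
    · subst h4
      simp only [hnx, if_pos rfl] at hxA
      exact h _ ha 0 hxA (Or.inr ⟨rfl, rfl⟩)
    · simp only [hnx, if_neg h4] at hxA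
      exact h a ha (a+1) hxA (Or.inl rfl)
  have hinj : Set.InjOn nx A := by
    intro a ha b hb hab
    have := hA a ha; have := hA b hb
    simp only [hnx] at hab
    split_ifs at hab <;> omega
  have hsub : A ∪ A.image nx ⊆ Finset.range (2*q+5) := by
    intro x hx
    rw [Finset.mem_union] at hx
    rw [Finset.mem_range]
    rcases hx with hx | hx
    · exact hA x hx
    · rw [Finset.mem_image] at hx
      obtain ⟨a, ha, rfl⟩ := hx
      have := hA a ha
      simp only [hnx]; split <;> omega
  have hc := Finset.card_le_card hsub
  rw [Finset.card_union_of_disjoint hdisj, Finset.card_image_of_injOn hinj,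
    Finset.card_range] at hc
  omega

lemma classify (S : Finset ℕ) (hsub : ∀ v ∈ S, 2 ≤ v ∧ v ≤ 2*q+3)
    (hind : ∀ a ∈ S, ∀ b ∈ S, b ≠ a+1) (hcard : S.card = q+1) :
    ∃ t, t ≤ q+1 ∧ ∀ v, (v ∈ S ↔
      ((v % 2 = 0 ∧ 2 ≤ v ∧ v ≤ 2*t) ∨ (v % 2 = 1 ∧ 2*t+3 ≤ v ∧ v ≤ 2*q+3))) := by
  have himg : S.image (· / 2) = Finset.Icc 1 (q+1) := by
    apply Finset.eq_of_subset_of_card_le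
    · intro x hx
      rw [Finset.mem_image] at hx
      obtain ⟨v, hv, rfl⟩ := hx
      have := hsub v hv
      rw [Finset.mem_Icc]; omega
    · have hinj : Set.InjOn (· / 2) S := by
        intro a ha b hb hab
        rw [Finset.mem_coe] at ha hb
        simp only at hab
        rcases Nat.lt_trichotomy a b with hlt | heq | hlt
        · exact absurd (by omega : b = a + 1) (hind a ha b hb)
        · exact heq
        · exact absurd (by omega : a = b + 1) (hind b hb a ha)
      rw [Nat.card_Icc, Finset.card_image_of_injOn hinj, hcard]
      omega
  have hone : ∀ k, 1 ≤ k → k ≤ q+1 → (2*k ∈ S ∨ 2*k+1 ∈ S) := by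
    intro k h1 h2
    have hk : k ∈ S.image (· / 2) := by
      rw [himg, Finset.mem_Icc]; exact ⟨h1, h2⟩
    rw [Finset.mem_image] at hk
    obtain ⟨v, hv, hvk⟩ := hk
    have := hsub v hv
    have : v = 2*k ∨ v = 2*k+1 := by omega
    rcases this with h | h
    · left; rwa [← h]
    · right; rwa [← h]
  set D := (Finset.Icc 1 (q+1)).filter (fun k => 2*k ∈ S) with hD
  have hdc : ∀ k, 1 ≤ k → 2*(k+1) ∈ S → 2*k ∈ S := by
    intro k h1 hk1
    have hb := hsub _ hk1
    by_contra hkS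
    have h21 : 2*k+1 ∈ S := (hone k h1 (by omega)).resolve_left hkS
    exact (hind (2*k+1) h21 (2*(k+1)) hk1) (by omega)
  have hdown : ∀ d j, 1 ≤ j → 2*j ∈ S → 1 ≤ j - d → 2*(j-d) ∈ S := by
    intro d
    induction d with
    | zero => intro j h1 h2 _; rwa [Nat.sub_zero]
    | succ d ih =>
        intro j h1 h2 h3
        have hjd : 1 ≤ j - d := by omega
        have hmem := ih j h1 h2 hjd
        have hstep := hdc (j-d-1) (by omega)
          (by rw [show j-d-1+1 = j-d by omega]; exact hmem)
        rwa [show j - (d+1) = j-d-1 by omega]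
  set t := if h : D.Nonempty then D.max' h else 0 with ht
  have htq : t ≤ q+1 := by
    rw [ht]; split
    · next h =>
        have hm : D.max' h ∈ (Finset.Icc 1 (q+1)).filter (fun k => 2*k ∈ S) :=
          D.max'_mem h
        rw [Finset.mem_filter, Finset.mem_Icc] at hm
        omega
    · omega
  have hDt : ∀ k, 1 ≤ k → k ≤ q+1 → (2*k ∈ S ↔ k ≤ t) := by
    intro k h1 h2
    constructor
    · intro hk
      have hkD : k ∈ D := by
        show k ∈ (Finset.Icc 1 (q+1)).filter (fun k => 2*k ∈ S)
        rw [Finset.mem_filter, Finset.mem_Icc]; exact ⟨⟨h1, h2⟩, hk⟩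
      have hne : D.Nonempty := ⟨k, hkD⟩
      rw [ht, dif_pos hne]
      exact D.le_max' k hkD
    · intro hk
      have hne : D.Nonempty := by
        by_contra hcon
        rw [ht, dif_neg hcon] at hk; omega
      have htD : t ∈ (Finset.Icc 1 (q+1)).filter (fun k => 2*k ∈ S) := by
        rw [ht, dif_pos hne]; exact D.max'_mem hne
      rw [Finset.mem_filter] at htD
      have h2t : 2*t ∈ S := htD.2
      have hfin := hdown (t - k) t (by omega) h2t (by omega)
      rwa [show t - (t-k) = k by omega] at hfin
  refine ⟨t, htq, ?_⟩
  intro v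
  constructor
  · intro hv
    have hb := hsub v hv
    by_cases hpar : v % 2 = 0
    · left
      have h2 : v = 2*(v/2) := by omega
      have hvt : v/2 ≤ t := (hDt (v/2) (by omega) (by omega)).mp (by rwa [← h2])
      exact ⟨hpar, hb.1, by omega⟩
    · right
      have h2 : v = 2*(v/2)+1 := by omega
      have hnot : ¬ (v/2 ≤ t) := by
        intro hle
        have hmem : 2*(v/2) ∈ S := (hDt (v/2) (by omega) (by omega)).mpr hle
        exact (hind _ hmem v hv) (by omega)
      exact ⟨by omega, by omega, hb.2⟩
  · rintro (⟨h1, h2, h3⟩ | ⟨h1, h2, h3⟩)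
    · have hmem : 2*(v/2) ∈ S := (hDt (v/2) (by omega) (by omega)).mpr (by omega)
      rwa [show 2*(v/2) = v by omega] at hmem
    · have hk : ¬ (2*(v/2) ∈ S) := by
        intro hmem
        have := (hDt (v/2) (by omega) (by omega)).mp hmem
        omega
      have hmem := (hone (v/2) (by omega) (by omega)).resolve_left hk
      rwa [show 2*(v/2)+1 = v by omega] at hmem

lemma card_filter_vC (Q : Finset (Vt q)) (hQ : ∀ p : Fin (q+3), Sum.inr p ∉ Q) :
    ((Finset.range (2*q+5)).filter (fun a => vC q a ∈ Q)).card = Q.card := by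
  apply Finset.card_bij (fun a _ => vC q a)
  · intro a ha
    rw [Finset.mem_filter] at ha
    exact ha.2
  · intro a ha b hb h
    rw [Finset.mem_filter, Finset.mem_range] at ha hb
    exact vC_inj q ha.1 hb.1 h
  · intro v hv
    rcases v with i | p
    · have hvi : vC q i.val = Sum.inl i := (vC_eq_inl q i.isLt i).mpr rfl
      refine ⟨i.val, ?_, hvi⟩
      rw [Finset.mem_filter, Finset.mem_range]
      exact ⟨i.isLt, by rwa [hvi]⟩
    · exact absurd hv (hQ p)

lemma decode_mem_BZ {t : ℕ} (ht : t ≤ q+1) {x : ℕ} (hx : x = 2*t+1 ∨ x = 2*t+2)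
    (W W' : Finset (Fin (2*q+4))) (w : Fin (2*q+4)) :
    decode q t w ∈ BZ q t x W' ↔ w ∈ W' := by
  unfold BZ
  rw [Finset.mem_insert, Finset.mem_image]
  constructor
  · rintro (h | ⟨w', hw', hww⟩)
    · exfalso
      unfold decode at h
      by_cases h1 : w.val ≤ q
      · rw [if_pos h1] at h
        have := vC_inj q (fF_lt q t _ h1) (by omega) h
        have := fF_fact t w.val
        omega
      · rw [if_neg h1] at h
        exact (by unfold vP vC at h; simp at h)
    · rwa [← decode_inj q ht hww]
  · intro h
    exact Or.inr ⟨w, h, rfl⟩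

lemma Phi_surj (B : Fin 3 → Finset (Vt q))
    (hB : SemiOrderedStable (G q) [q+4, q+2, q+2] B) :
    ∃ b s t W, t ≤ q+1 ∧ W.card = q+3 ∧ B = Phi q b s t W := by
  classical
  obtain ⟨hst0, hdis0, hcov, hcard⟩ := hB
  have hst : ∀ i : Fin 3, IsStableSet (G q) (B i) := hst0
  have hdis : ∀ i j : Fin 3, i ≠ j → Disjoint (B i) (B j) := hdis0
  have hc0 : (B 0).card = q+4 := hcard ⟨0, by simp⟩
  have huniq : ∀ (v : Vt q) (i j : Fin 3), v ∈ B i → v ∈ B j → i = j := by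
    intro v i j h1 h2
    by_contra hne
    exact (Finset.disjoint_left.mp (hdis i j hne) h1) h2
  obtain ⟨iu0, hiu⟩ := hcov (vC q 0)
  have hiuc : ∃ iu : Fin 3, vC q 0 ∈ B iu := ⟨iu0, hiu⟩
  clear hiu
  obtain ⟨iu, hiu⟩ := hiuc
  have hpend : ∀ p : Fin (q+3), Sum.inr p ∉ B iu := fun p hp =>
    (hst iu) _ hiu _ hp ((adj_vC_inr q (by omega) p).mpr rfl)
  have hiu0 : iu ≠ 0 := by
    intro h
    subst h
    have hA := card_filter_vC q (B 0) hpend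
    have hbound : ((Finset.range (2*q+5)).filter (fun a => vC q a ∈ B 0)).card ≤ q+2 := by
      apply cycle_bound q
      · intro a ha
        rw [Finset.mem_filter, Finset.mem_range] at ha
        exact ha.1
      · intro a ha c hc hadj
        rw [Finset.mem_filter, Finset.mem_range] at ha hc
        exact (hst 0) _ ha.2 _ hc.2
          ((adj_vC_vC q ha.1 hc.1).mpr (by omega))
    omega
  have hiu12 : iu = 1 ∨ iu = 2 := by
    fin_cases iu
    · exact absurd rfl hiu0
    · left; rfl
    · right; rfl
  have hcu : (B iu).card = q+2 := by
    rcases hiu12 with h | h <;> subst h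
    · exact hcard ⟨1, by simp⟩
    · exact hcard ⟨2, by simp⟩
  set io : Fin 3 := if iu = 1 then 2 else 1 with hioo
  have hione : io ≠ iu := by rcases hiu12 with h | h <;> subst h <;> simp [hioo]
  have hio0 : io ≠ 0 := by rcases hiu12 with h | h <;> subst h <;> simp [hioo]
  have hall : ∀ i : Fin 3, i = 0 ∨ i = iu ∨ i = io := by
    intro i
    rcases hiu12 with h | h <;> subst h <;> fin_cases i <;> simp [hioo]
  set S : Finset ℕ := (Finset.range (2*q+5)).filter (fun a => vC q a ∈ B iu ∧ a ≠ 0)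
    with hS
  have hSmem : ∀ a, a ∈ S ↔ (a < 2*q+5 ∧ vC q a ∈ B iu ∧ a ≠ 0) := by
    intro a
    rw [hS]
    simp [Finset.mem_filter, Finset.mem_range, and_assoc]
  have hcS : S.card = q+1 := by
    have h1 : (Finset.range (2*q+5)).filter (fun a => vC q a ∈ B iu) = insert 0 S := by
      ext a
      rw [Finset.mem_insert, hSmem, Finset.mem_filter, Finset.mem_range]
      constructor
      · rintro ⟨h1, h2⟩
        by_cases h0 : a = 0
        · exact Or.inl h0
        · exact Or.inr ⟨h1, h2, h0⟩
      · rintro (rfl | ⟨h1, h2, h3⟩)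
        · exact ⟨by omega, hiu⟩
        · exact ⟨h1, h2⟩
    have h2 := card_filter_vC q (B iu) hpend
    rw [h1, Finset.card_insert_of_notMem (by simp [hSmem])] at h2
    omega
  have hSsub : ∀ v ∈ S, 2 ≤ v ∧ v ≤ 2*q+3 := by
    intro v hv
    rw [hSmem] at hv
    obtain ⟨hlt, hmem, hne⟩ := hv
    constructor
    · by_contra hcon
      have hv1 : v = 1 := by omega
      subst hv1
      exact (hst iu) _ hiu _ hmem ((adj_vC_vC q (by omega) (by omega)).mpr (by omega))
    · by_contra hcon
      have hv1 : v = 2*q+4 := by omega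
      subst hv1
      exact (hst iu) _ hmem _ hiu ((adj_vC_vC q (by omega) (by omega)).mpr (by omega))
  have hSind : ∀ a ∈ S, ∀ c ∈ S, c ≠ a+1 := by
    intro a ha c hc heq
    rw [hSmem] at ha hc
    exact (hst iu) _ ha.2.1 _ hc.2.1 ((adj_vC_vC q (by omega) (by omega)).mpr (by omega))
  obtain ⟨t, htq, hSval⟩ := classify q S hSsub hSind hcS
  have hBiuval : ∀ a, a < 2*q+5 → (vC q a ∈ B iu ↔ (a = 0 ∨ a ∈ S)) := by
    intro a ha
    constructor
    · intro h
      by_cases h0 : a = 0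
      · exact Or.inl h0
      · exact Or.inr ((hSmem a).mpr ⟨ha, h, h0⟩)
    · rintro (rfl | h)
      · exact hiu
      · exact ((hSmem a).mp h).2.1
  have hp1 : vC q (2*t+1) ∉ B iu := by
    rw [hBiuval _ (by omega)]
    rintro (h | h)
    · omega
    · rw [hSval] at h; omega
  have hp2 : vC q (2*t+2) ∉ B iu := by
    rw [hBiuval _ (by omega)]
    rintro (h | h)
    · omega
    · rw [hSval] at h; omega
  have hadj12 : (G q).Adj (vC q (2*t+1)) (vC q (2*t+2)) :=
    (adj_vC_vC q (by omega) (by omega)).mpr (by omega)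
  have hpair : (vC q (2*t+1) ∈ B 0 ∧ vC q (2*t+2) ∈ B io) ∨
      (vC q (2*t+1) ∈ B io ∧ vC q (2*t+2) ∈ B 0) := by
    obtain ⟨i1, hi1⟩ : ∃ i : Fin 3, vC q (2*t+1) ∈ B i := hcov (vC q (2*t+1))
    obtain ⟨i2, hi2⟩ : ∃ i : Fin 3, vC q (2*t+2) ∈ B i := hcov (vC q (2*t+2))
    have hi1ne : i1 ≠ iu := fun h => hp1 (h ▸ hi1)
    have hi2ne : i2 ≠ iu := fun h => hp2 (h ▸ hi2)
    have hne12 : i1 ≠ i2 := by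
      intro h
      subst h
      exact (hst i1) _ hi1 _ hi2 hadj12
    rcases hall i1 with h1 | h1 | h1 <;> rcases hall i2 with h2 | h2 | h2 <;>
      subst h1 <;> subst h2 <;> first
        | exact absurd rfl hne12
        | exact absurd rfl hi1ne
        | exact absurd rfl hi2ne
        | exact Or.inl ⟨hi1, hi2⟩
        | exact Or.inr ⟨hi1, hi2⟩
  set s : Bool := decide (vC q (2*t+1) ∈ B 0) with hsdef
  set W : Finset (Fin (2*q+4)) := Finset.univ.filter (fun w => decode q t w ∈ B 0)
    with hWdef
  have hWmem : ∀ w, w ∈ W ↔ decode q t w ∈ B 0 := by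
    intro w
    rw [hWdef]
    simp [Finset.mem_filter]
  have hs1 : vC q (pr t s) ∈ B 0 ∧ vC q (pr t (!s)) ∈ B io := by
    rcases hpair with ⟨h1, h2⟩ | ⟨h1, h2⟩
    · have hst' : s = true := by rw [hsdef]; simp [h1]
      rw [hst']
      exact ⟨h1, h2⟩
    · have hnot : vC q (2*t+1) ∉ B 0 := by
        intro h
        exact hio0 (huniq _ _ _ h1 h)
      have hst' : s = false := by rw [hsdef]; simp [hnot]
      rw [hst']
      exact ⟨h2, h1⟩
  have hsubBU : BU q t ⊆ B iu := by
    intro v hv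
    rcases v with i | p
    · rw [mem_BU_inl q htq] at hv
      have hvc : vC q i.val = Sum.inl i := (vC_eq_inl q i.isLt i).mpr rfl
      rcases hv with h0 | ⟨k, hk, hsk⟩
      · rw [← hvc, hBiuval _ i.isLt]
        exact Or.inl h0
      · rw [← hvc, hBiuval _ i.isLt]
        refine Or.inr ((hSval i.val).mpr ?_)
        exact (sF_ex q htq i.val).mp ⟨k, hk, hsk⟩
    · exact absurd hv (mem_BU_inr q t p)
  have hsubB0 : BZ q t (pr t s) W ⊆ B 0 := by
    intro v hv
    unfold BZ at hv
    rw [Finset.mem_insert] at hv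
    rcases hv with rfl | hv
    · exact hs1.1
    · rw [Finset.mem_image] at hv
      obtain ⟨w, hw, rfl⟩ := hv
      exact (hWmem w).mp hw
  have hsubBio : BZ q t (pr t (!s)) Wᶜ ⊆ B io := by
    intro v hv
    unfold BZ at hv
    rw [Finset.mem_insert] at hv
    rcases hv with rfl | hv
    · exact hs1.2
    · rw [Finset.mem_image] at hv
      obtain ⟨w, hw, rfl⟩ := hv
      rw [Finset.mem_compl] at hw
      have hnot0 : decode q t w ∉ B 0 := fun h => hw ((hWmem w).mpr h)
      have hnotu : decode q t w ∉ B iu := by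
        unfold decode
        by_cases h1 : w.val ≤ q
        · rw [if_pos h1]
          rw [hBiuval _ (fF_lt q t _ h1)]
          rintro (h | h)
          · have := fF_fact t w.val; omega
          · rw [hSval] at h
            have := fF_fact t w.val
            omega
        · rw [if_neg h1]
          unfold vP
          exact hpend _
      obtain ⟨i, hi⟩ : ∃ i : Fin 3, decode q t w ∈ B i := hcov (decode q t w)
      rcases hall i with h | h | h <;> subst h
      · exact absurd hi hnot0
      · exact absurd hi hnotu
      · exact hi
  have hcover3 := cover_Phi q htq s W
  have hB0 : B 0 = BZ q t (pr t s) W := by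
    apply Finset.Subset.antisymm _ hsubB0
    intro v hv
    rcases hcover3 v with h | h | h
    · exact absurd (huniq v _ _ (hsubBU h) hv) hiu0
    · exact h
    · exact absurd (huniq v _ _ (hsubBio h) hv) hio0
  have hBiu : B iu = BU q t := by
    apply Finset.Subset.antisymm _ hsubBU
    intro v hv
    rcases hcover3 v with h | h | h
    · exact h
    · exact absurd (huniq v _ _ (hsubB0 h) hv) hiu0.symm
    · exact absurd (huniq v _ _ (hsubBio h) hv) hione
  have hBio : B io = BZ q t (pr t (!s)) Wᶜ := by
    apply Finset.Subset.antisymm _ hsubBio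
    intro v hv
    rcases hcover3 v with h | h | h
    · exact absurd (huniq v _ _ (hsubBU h) hv) hione.symm
    · exact absurd (huniq v _ _ (hsubB0 h) hv) hio0.symm
    · exact h
  have hWcard : W.card = q+3 := by
    have hcc := hc0
    rw [hB0, card_BZ q htq (pr_fact t s) W] at hcc
    omega
  refine ⟨decide (iu = 1), s, t, W, htq, hWcard, ?_⟩
  funext i
  rcases hall i with h | h | h <;> subst h
  · rw [hB0]; rfl
  · rw [hBiu]
    rcases hiu12 with h | h <;> rw [h] <;> rfl
  · rw [hBio]
    rcases hiu12 with h | h <;> rw [hioo, h] <;> rfl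

lemma vC0_mem_BU {t : ℕ} (ht : t ≤ q+1) : vC q 0 ∈ BU q t := by
  rw [(vC_eq_inl q (by omega) ⟨0, by omega⟩).mpr rfl]
  exact (mem_BU_inl q ht _).mpr (Or.inl rfl)

lemma vC0_not_mem_BZ {t x : ℕ} (W : Finset (Fin (2*q+4))) (ht : t ≤ q+1)
    (hx : x = 2*t+1 ∨ x = 2*t+2) : vC q 0 ∉ BZ q t x W := by
  rw [(vC_eq_inl q (by omega) ⟨0, by omega⟩).mpr rfl]
  rw [mem_BZ_inl q t x W _ (by omega)]
  rintro (h | ⟨k, hk, _, hfk⟩)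
  · have h0 : (0:ℕ) = x := h
    omega
  · have h0 : fF t k = 0 := hfk
    have := fF_fact t k
    omega

lemma BU_eq_t {t t' : ℕ} (ht : t ≤ q+1) (ht' : t' ≤ q+1) (h : BU q t = BU q t') :
    t = t' := by
  have key : ∀ a b : ℕ, a ≤ q+1 → b ≤ q+1 → a < b → BU q a = BU q b → False := by
    intro a b ha hb hab heq
    have hmem : Sum.inl (⟨2*a+2, by omega⟩ : Fin (2*q+5)) ∈ BU q b :=
      (mem_BU_inl q hb _).mpr (Or.inr ⟨a, by omega, by simp [sF, hab]⟩)
    rw [← heq] at hmem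
    rcases (mem_BU_inl q ha _).mp hmem with h0 | hex
    · have : 2*a+2 = 0 := h0
      omega
    · have hres : ((2*a+2) % 2 = 0 ∧ 2 ≤ 2*a+2 ∧ 2*a+2 ≤ 2*a) ∨
          ((2*a+2) % 2 = 1 ∧ 2*a+3 ≤ 2*a+2 ∧ 2*a+2 ≤ 2*q+3) := (sF_ex q ha _).mp hex
      omega
  rcases Nat.lt_trichotomy t t' with hlt | he | hlt
  · exact absurd (key t t' ht ht' hlt h) not_false
  · exact he
  · exact absurd (key t' t ht' ht hlt h.symm) not_false

lemma BZ_eq_sW {t : ℕ} (ht : t ≤ q+1) {s s' : Bool} {W W' : Finset (Fin (2*q+4))}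
    (h : BZ q t (pr t s) W = BZ q t (pr t s') W') : s = s' ∧ W = W' := by
  have hss : s = s' := by
    by_contra hne
    have hmem : vC q (pr t s) ∈ BZ q t (pr t s') W' := by
      rw [← h]
      exact Finset.mem_insert_self _ _
    rw [(vC_eq_inl q (pr_lt q ht s) ⟨pr t s, pr_lt q ht s⟩).mpr rfl] at hmem
    rcases (mem_BZ_inl q t _ W' _ (pr_lt q ht s')).mp hmem with h0 | ⟨k, hk, _, hfk⟩
    · have h1 : pr t s = pr t s' := h0
      have := pr_fact t s
      have := pr_fact t s'
      cases s <;> cases s' <;> simp [pr] at h1 hne ⊢ <;> omega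
    · have h1 : fF t k = pr t s := hfk
      have := fF_fact t k
      have := pr_fact t s
      omega
  subst hss
  refine ⟨rfl, ?_⟩
  ext w
  rw [← decode_mem_BZ q ht (pr_fact t s) W W w, ← decode_mem_BZ q ht (pr_fact t s) W W' w, h]

lemma main (q : ℕ) :
    aTilde (G q) [q+4, q+2, q+2] = 4*(q+2) * Nat.choose (2*q+4) (q+3) := by
  classical
  set F : (Bool × Bool × Fin (q+2) × {W : Finset (Fin (2*q+4)) // W.card = q+3}) →
      {B : Fin ([q+4, q+2, q+2] : List ℕ).length → Finset (Vt q) //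
        SemiOrderedStable (G q) [q+4, q+2, q+2] B} :=
    fun d => ⟨Phi q d.1 d.2.1 d.2.2.1.val d.2.2.2.val,
      sos_Phi q d.1 d.2.1 (Nat.lt_succ_iff.mp d.2.2.1.isLt) d.2.2.2.2⟩ with hF
  have hinj : Function.Injective F := by
    rintro ⟨b, s, ⟨t, htl⟩, ⟨W, hW⟩⟩ ⟨b', s', ⟨t', htl'⟩, ⟨W', hW'⟩⟩ h
    have ht : t ≤ q+1 := by omega
    have ht' : t' ≤ q+1 := by omega
    have h' : Phi q b s t W = Phi q b' s' t' W' := congrArg Subtype.val h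
    have happ : ∀ i : Fin 3, Phi q b s t W i = Phi q b' s' t' W' i :=
      fun i => congrFun h' i
    have hbb : b = b' := by
      by_contra hne
      cases b <;> cases b'
      · exact hne rfl
      · have h1 : BZ q t (pr t (!s)) Wᶜ = BU q t' := happ 1
        exact vC0_not_mem_BZ q Wᶜ ht (pr_fact t (!s)) (h1 ▸ vC0_mem_BU q ht')
      · have h1 : BU q t = BZ q t' (pr t' (!s')) W'ᶜ := happ 1
        exact vC0_not_mem_BZ q W'ᶜ ht' (pr_fact t' (!s')) (h1 ▸ vC0_mem_BU q ht)
      · exact hne rfl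
    subst hbb
    have htt : t = t' := by
      apply BU_eq_t q ht ht'
      cases b
      · exact happ 2
      · exact happ 1
    subst htt
    have h0 : BZ q t (pr t s) W = BZ q t (pr t s') W' := happ 0
    obtain ⟨hss, hWW⟩ := BZ_eq_sW q ht h0
    subst hss
    subst hWW
    rfl
  have hsurj : Function.Surjective F := by
    rintro ⟨B, hB⟩
    obtain ⟨b, s, t, W, ht, hW, hBeq⟩ := Phi_surj q B hB
    exact ⟨⟨b, s, ⟨t, by omega⟩, ⟨W, hW⟩⟩, Subtype.ext hBeq.symm⟩
  have hcount := Nat.card_eq_of_bijective F ⟨hinj, hsurj⟩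
  unfold aTilde
  rw [← hcount, Nat.card_eq_fintype_card]
  rw [Fintype.card_prod, Fintype.card_prod, Fintype.card_prod]
  rw [Fintype.card_bool, Fintype.card_fin, Fintype.card_finset_len, Fintype.card_fin]
  ring

end SquidWork

theorem squid_aTilde_n1nn (n : ℕ) (hn : 3 ≤ n) :
    aTilde (squid n) [n + 1, n - 1, n - 1] = 4 * (n - 1) * Nat.choose (2 * n - 2) n := by
  obtain ⟨q, rfl⟩ : ∃ q, n = q + 3 := ⟨n - 3, by omega⟩
  exact SquidWork.main q
end

section
/- For every integer n ≥ 3, the squid graph Sq(2n−1;1^n) is nice: whenever it has a stable partition of type λ and μ ≤ λ in dominance order (μ, λ partitions of 3n−1), it also has a stable partition of type μ. -/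
lemma sq_adj_ll (n : ℕ) (hn : 3 ≤ n) (i j : Fin (2*n-1)) :
    (squid n).Adj (.inl i) (.inl j) ↔
      (i.val + 1 = j.val ∨ j.val + 1 = i.val ∨ (i.val = 2*n-2 ∧ j.val = 0) ∨ (j.val = 2*n-2 ∧ i.val = 0)) := by
  have hi := i.isLt
  have hj := j.isLt
  have hmod : ∀ a : ℕ, a < 2*n-1 → (a+1) % (2*n-1) = if a = 2*n-2 then 0 else a+1 := by
    intro a ha
    split_ifs with h
    · rw [show a+1 = 2*n-1 by omega, Nat.mod_self]
    · exact Nat.mod_eq_of_lt (by omega)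
  rw [squid, SimpleGraph.fromRel_adj]
  show (Sum.inl i ≠ Sum.inl j ∧ ((i.val + 1) % (2*n-1) = j.val ∨ (j.val + 1) % (2*n-1) = i.val)) ↔ _
  have hne : (Sum.inl i ≠ (Sum.inl j : Fin (2*n-1) ⊕ Fin n)) ↔ i.val ≠ j.val := by
    simp [Fin.ext_iff]
  rw [hne, hmod i.val hi, hmod j.val hj]
  split_ifs <;> omega

lemma sq_adj_lr (n : ℕ) (i : Fin (2*n-1)) (k : Fin n) :
    (squid n).Adj (.inl i) (.inr k) ↔ i.val = 0 := by
  rw [squid, SimpleGraph.fromRel_adj]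
  show (Sum.inl i ≠ Sum.inr k ∧ (i.val = 0 ∨ False)) ↔ _
  simp

lemma sq_adj_rr (n : ℕ) (k l : Fin n) : ¬ (squid n).Adj (.inr k) (.inr l) := by
  rw [squid, SimpleGraph.fromRel_adj]
  show ¬ (Sum.inr k ≠ Sum.inr l ∧ (False ∨ False))
  simp

noncomputable def vmap (n : ℕ) (hn : 3 ≤ n) (p : ℕ) : Fin (2*n-1) ⊕ Fin n :=
  if p < n then Sum.inl ⟨(2*p) % (2*n-1), Nat.mod_lt _ (by omega)⟩
  else if p < 2*n then Sum.inr ⟨(p-n) % n, Nat.mod_lt _ (by omega)⟩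
  else Sum.inl ⟨(2*(p-2*n)+1) % (2*n-1), Nat.mod_lt _ (by omega)⟩

lemma vmap_lt1 (n : ℕ) (hn : 3 ≤ n) (p : ℕ) (h : p < n) :
    vmap n hn p = Sum.inl ⟨2*p, by omega⟩ := by
  rw [vmap, if_pos h]
  congr 1
  exact Fin.ext (Nat.mod_eq_of_lt (by omega))

lemma vmap_lt2 (n : ℕ) (hn : 3 ≤ n) (p : ℕ) (h1 : n ≤ p) (h2 : p < 2*n) :
    vmap n hn p = Sum.inr ⟨p - n, by omega⟩ := by
  rw [vmap, if_neg (by omega), if_pos h2]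
  congr 1
  exact Fin.ext (Nat.mod_eq_of_lt (by omega))

lemma vmap_lt3 (n : ℕ) (hn : 3 ≤ n) (p : ℕ) (h1 : 2*n ≤ p) (h2 : p < 3*n-1) :
    vmap n hn p = Sum.inl ⟨2*(p-2*n)+1, by omega⟩ := by
  rw [vmap, if_neg (by omega), if_neg (by omega)]
  congr 1
  exact Fin.ext (Nat.mod_eq_of_lt (by omega))

lemma vmap_injOn (n : ℕ) (hn : 3 ≤ n) (p q : ℕ) (hp : p < 3*n-1) (hq : q < 3*n-1)
    (h : vmap n hn p = vmap n hn q) : p = q := by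
  rcases Nat.lt_or_ge p n with h1 | h1
  · rcases Nat.lt_or_ge q n with h2 | h2
    · rw [vmap_lt1 n hn p h1, vmap_lt1 n hn q h2] at h
      simp only [Sum.inl.injEq, Fin.ext_iff] at h; omega
    · rcases Nat.lt_or_ge q (2*n) with h3 | h3
      · rw [vmap_lt1 n hn p h1, vmap_lt2 n hn q h2 h3] at h
        simp at h
      · rw [vmap_lt1 n hn p h1, vmap_lt3 n hn q h3 hq] at h
        simp only [Sum.inl.injEq, Fin.ext_iff] at h; omega
  · rcases Nat.lt_or_ge p (2*n) with h3 | h3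
    · rcases Nat.lt_or_ge q n with h2 | h2
      · rw [vmap_lt2 n hn p h1 h3, vmap_lt1 n hn q h2] at h
        simp at h
      · rcases Nat.lt_or_ge q (2*n) with h4 | h4
        · rw [vmap_lt2 n hn p h1 h3, vmap_lt2 n hn q h2 h4] at h
          simp only [Sum.inr.injEq, Fin.ext_iff] at h; omega
        · rw [vmap_lt2 n hn p h1 h3, vmap_lt3 n hn q h4 hq] at h
          simp at h
    · rcases Nat.lt_or_ge q n with h2 | h2
      · rw [vmap_lt3 n hn p h3 hp, vmap_lt1 n hn q h2] at h
        simp only [Sum.inl.injEq, Fin.ext_iff] at h; omega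
      · rcases Nat.lt_or_ge q (2*n) with h4 | h4
        · rw [vmap_lt3 n hn p h3 hp, vmap_lt2 n hn q h2 h4] at h
          simp at h
        · rw [vmap_lt3 n hn p h3 hp, vmap_lt3 n hn q h4 hq] at h
          simp only [Sum.inl.injEq, Fin.ext_iff] at h; omega

lemma vmap_surj (n : ℕ) (hn : 3 ≤ n) (v : Fin (2*n-1) ⊕ Fin n) :
    ∃ p, p < 3*n-1 ∧ vmap n hn p = v := by
  rcases v with j | k
  · have hj := j.isLt
    rcases Nat.even_or_odd j.val with ⟨c, hc⟩ | ⟨c, hc⟩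
    · refine ⟨c, by omega, ?_⟩
      rw [vmap_lt1 n hn c (by omega)]
      simp only [Sum.inl.injEq, Fin.ext_iff]; omega
    · refine ⟨2*n + c, by omega, ?_⟩
      rw [vmap_lt3 n hn _ (by omega) (by omega)]
      simp only [Sum.inl.injEq, Fin.ext_iff]; omega
  · have hk := k.isLt
    refine ⟨n + k.val, by omega, ?_⟩
    rw [vmap_lt2 n hn _ (by omega) (by omega)]
    simp only [Sum.inr.injEq, Fin.ext_iff]; omega

lemma vmap_not_adj (n : ℕ) (hn : 3 ≤ n) (p q : ℕ) (hpq : p < q) (hq : q < 3*n-1)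
    (hgap : q - p ≤ 2*n-2) (hside : 1 ≤ p ∨ q ≤ n-2) :
    ¬ (squid n).Adj (vmap n hn p) (vmap n hn q) := by
  rcases Nat.lt_or_ge p n with h1 | h1
  · rcases Nat.lt_or_ge q n with h2 | h2
    · rw [vmap_lt1 n hn p h1, vmap_lt1 n hn q h2, sq_adj_ll n hn]
      simp only [Fin.val_mk]; omega
    · rcases Nat.lt_or_ge q (2*n) with h3 | h3
      · rw [vmap_lt1 n hn p h1, vmap_lt2 n hn q h2 h3, sq_adj_lr n]
        simp only [Fin.val_mk]; omega
      · rw [vmap_lt1 n hn p h1, vmap_lt3 n hn q h3 hq, sq_adj_ll n hn]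
        simp only [Fin.val_mk]; omega
  · rcases Nat.lt_or_ge p (2*n) with h3 | h3
    · rcases Nat.lt_or_ge q (2*n) with h4 | h4
      · rw [vmap_lt2 n hn p h1 h3, vmap_lt2 n hn q (by omega) h4]
        exact sq_adj_rr n _ _
      · rw [vmap_lt2 n hn p h1 h3, vmap_lt3 n hn q h4 hq, (squid n).adj_comm, sq_adj_lr n]
        simp only [Fin.val_mk]; omega
    · rw [vmap_lt3 n hn p h3 (by omega), vmap_lt3 n hn q (by omega) hq, sq_adj_ll n hn]
      simp only [Fin.val_mk]; omega

/-! ### List helper lemmas -/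

lemma sum_take_le' (l : List ℕ) (k : ℕ) : (l.take k).sum ≤ l.sum := by
  conv_rhs => rw [← List.sum_take_add_sum_drop l k]
  exact Nat.le_add_right _ _

lemma sum_take_mono' (l : List ℕ) {a b : ℕ} (h : a ≤ b) :
    (l.take a).sum ≤ (l.take b).sum := by
  rw [show l.take a = (l.take b).take a by rw [List.take_take, Nat.min_eq_left h]]
  exact sum_take_le' _ _

lemma sum_take_lt' (l : List ℕ) (hpos : ∀ x ∈ l, 0 < x) {k : ℕ} (hk : k < l.length) :
    (l.take k).sum < l.sum := by
  have h := List.sum_take_add_sum_drop l k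
  have hd : l.drop k = l[k] :: l.drop (k+1) := List.drop_eq_getElem_cons hk
  have hx : 0 < l[k] := hpos _ (l.getElem_mem hk)
  rw [hd, List.sum_cons] at h
  omega

lemma exists_interval' (l : List ℕ) :
    ∀ d k p, l.length - k ≤ d → (l.take k).sum ≤ p → p < l.sum →
      ∃ i, k ≤ i ∧ i < l.length ∧ (l.take i).sum ≤ p ∧ p < (l.take (i+1)).sum := by
  intro d
  induction d with
  | zero =>
    intro k p hd h1 h2
    exfalso
    have hk : l.length ≤ k := by omega
    rw [List.take_of_length_le hk] at h1; omega
  | succ d ih =>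
    intro k p hd h1 h2
    rcases Nat.lt_or_ge k l.length with hk | hk
    · by_cases hp : p < (l.take (k+1)).sum
      · exact ⟨k, le_refl k, hk, h1, hp⟩
      · obtain ⟨i, hi1, hi2, hi3, hi4⟩ := ih (k+1) p (by omega) (by omega) h2
        exact ⟨i, by omega, hi2, hi3, hi4⟩
    · exfalso; rw [List.take_of_length_le hk] at h1; omega

/-! ### chunk bookkeeping -/

def ctsum (M : List ℕ) (k : ℕ) : ℕ := (M.take k).sum

def gpart (M : List ℕ) (i : ℕ) : ℕ := ctsum M (i+1) - ctsum M i

def startPos (M : List ℕ) (i : ℕ) : ℕ :=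
  if i = 2 then 0 else if i = 0 then gpart M 2
  else if i = 1 then gpart M 2 + gpart M 0 else ctsum M i

lemma gpart_eq_get (M : List ℕ) (i : ℕ) (h : i < M.length) :
    gpart M i = M.get ⟨i, h⟩ := by
  rw [gpart, ctsum, ctsum, List.sum_take_succ M i h]
  simp [List.get_eq_getElem]

lemma tsum_three (M : List ℕ) : ctsum M 3 = gpart M 0 + gpart M 1 + gpart M 2 := by
  have h0 : ctsum M 0 = 0 := rfl
  have a := sum_take_mono' M (show (0:ℕ) ≤ 1 by omega)
  have b := sum_take_mono' M (show (1:ℕ) ≤ 2 by omega)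
  have c := sum_take_mono' M (show (2:ℕ) ≤ 3 by omega)
  simp only [gpart, ctsum, Nat.reduceAdd] at *
  omega

/-! ### necessity: stable sets are small, at least 3 blocks -/

lemma stable_card_le (n : ℕ) (hn : 3 ≤ n) (S : Finset (Fin (2*n-1) ⊕ Fin n))
    (hS : IsStableSet (squid n) S) : S.card ≤ 2*n-1 := by
  classical
  haveI : NeZero (2*n-1) := ⟨by omega⟩
  set C : Finset (Fin (2*n-1)) := Finset.univ.filter (fun i => Sum.inl i ∈ S) with hC
  have hsub : S ⊆ C.image Sum.inl ∪ Finset.univ.image (Sum.inr : Fin n → _) := by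
    intro v hv
    rcases v with i | k
    · exact Finset.mem_union_left _
        (Finset.mem_image.2 ⟨i, Finset.mem_filter.2 ⟨Finset.mem_univ _, hv⟩, rfl⟩)
    · exact Finset.mem_union_right _ (Finset.mem_image.2 ⟨k, Finset.mem_univ _, rfl⟩)
  have h1 : S.card ≤ C.card + n := by
    calc S.card ≤ _ := Finset.card_le_card hsub
    _ ≤ (C.image Sum.inl).card + (Finset.univ.image (Sum.inr : Fin n → _)).card :=
        Finset.card_union_le _ _
    _ ≤ C.card + n := by
        rw [Finset.card_image_of_injective _ Sum.inl_injective,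
          Finset.card_image_of_injective _ Sum.inr_injective, Finset.card_univ, Fintype.card_fin]
  have hone : (1 : Fin (2*n-1)).val = 1 := by
    rw [Fin.val_one']; exact Nat.mod_eq_of_lt (by omega)
  have hdisj : Disjoint C (C.image (· + 1)) := by
    rw [Finset.disjoint_right]
    intro x hximg hxC
    obtain ⟨y, hy, rfl⟩ := Finset.mem_image.1 hximg
    have hyS : Sum.inl y ∈ S := (Finset.mem_filter.1 hy).2
    have hxS : Sum.inl (y + 1) ∈ S := (Finset.mem_filter.1 hxC).2
    apply hS _ hyS _ hxS
    rw [sq_adj_ll n hn]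
    have hadd : (y + 1).val = (y.val + 1) % (2*n-1) := by rw [Fin.add_def, hone]
    have hy' := y.isLt
    rcases Nat.lt_or_ge (y.val + 1) (2*n-1) with h | h
    · left; rw [hadd, Nat.mod_eq_of_lt h]
    · right; right; left
      refine ⟨by omega, ?_⟩
      rw [hadd, show y.val + 1 = 2*n-1 by omega, Nat.mod_self]
  have h3 : (C.image (· + 1)).card = C.card :=
    Finset.card_image_of_injective _ (add_left_injective 1)
  have h2 : C.card + (C.image (· + 1)).card ≤ 2*n-1 := by
    rw [← Finset.card_union_of_disjoint hdisj]
    calc _ ≤ (Finset.univ : Finset (Fin (2*n-1))).card :=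
          Finset.card_le_card (Finset.subset_univ _)
    _ = 2*n-1 := by rw [Finset.card_univ, Fintype.card_fin]
  omega

lemma three_le_length (n : ℕ) (hn : 3 ≤ n) (L : List ℕ)
    (B : Fin L.length → Finset (Fin (2*n-1) ⊕ Fin n))
    (hB : SemiOrderedStable (squid n) L B) : 3 ≤ L.length := by
  obtain ⟨hstab, hdisj, hcov, hcard⟩ := hB
  by_contra hlen
  push_neg at hlen
  have h0 : (0:ℕ) < 2*n-1 := by omega
  have hne0 : L.length ≠ 0 := by
    intro h
    obtain ⟨i, _⟩ := hcov (Sum.inl ⟨0, h0⟩)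
    exact absurd i.isLt (by omega)
  have hi0lt : 0 < L.length := by omega
  set i0 : Fin L.length := ⟨0, hi0lt⟩ with hi0
  have hi0v : (i0 : Fin L.length).val = 0 := rfl
  by_cases hone : L.length = 1
  · obtain ⟨i, hi⟩ := hcov (Sum.inl ⟨0, h0⟩)
    obtain ⟨j, hj⟩ := hcov (Sum.inl ⟨1, by omega⟩)
    have hii : i = i0 := Fin.ext (by have := i.isLt; omega)
    have hjj : j = i0 := Fin.ext (by have := j.isLt; omega)
    rw [hii] at hi; rw [hjj] at hj
    refine hstab i0 _ hi _ hj ?_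
    rw [sq_adj_ll n hn]
    left; simp [Fin.val_mk]
  · have htwo : L.length = 2 := by omega
    have hi1lt : 1 < L.length := by omega
    set i1 : Fin L.length := ⟨1, hi1lt⟩ with hi1
    have hmemcase : ∀ x, x ∉ B i0 → x ∈ B i1 := by
      intro x hx
      obtain ⟨j, hj⟩ := hcov x
      have hj2 : j.val = 0 ∨ j.val = 1 := by have := j.isLt; omega
      rcases hj2 with h | h
      · exact absurd hj (by rw [show j = i0 from Fin.ext h]; exact hx)
      · rw [show j = i1 from Fin.ext h] at hj; exact hj
    have hswap : ∀ x y, (squid n).Adj x y → (x ∈ B i0 ↔ y ∉ B i0) := by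
      intro x y hxy
      constructor
      · intro hx hy; exact hstab i0 x hx y hy hxy
      · intro hy
        by_contra hx
        exact hstab i1 x (hmemcase x hx) y (hmemcase y hy) hxy
    have key : ∀ k, ∀ hk : k < 2*n-1,
        ((Sum.inl ⟨k, hk⟩ : Fin (2*n-1) ⊕ Fin n) ∈ B i0 ↔
          ((Sum.inl ⟨0, h0⟩ : Fin (2*n-1) ⊕ Fin n) ∈ B i0 ↔ Even k)) := by
      intro k
      induction k with
      | zero => intro hk; simp
      | succ k ih =>
        intro hk
        have hk' : k < 2*n-1 := by omega
        have hIH := ih hk'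
        have hadj : (squid n).Adj (Sum.inl ⟨k, hk'⟩) (Sum.inl ⟨k+1, hk⟩) := by
          rw [sq_adj_ll n hn]; left; simp [Fin.val_mk]
        have hsw := hswap _ _ hadj
        rw [Nat.even_add_one]
        tauto
    have hw : 2*n-2 < 2*n-1 := by omega
    have hlast := key (2*n-2) hw
    have heven : Even (2*n-2) := ⟨n-1, by omega⟩
    have hadj : (squid n).Adj (Sum.inl ⟨2*n-2, hw⟩) (Sum.inl ⟨0, h0⟩) := by
      rw [sq_adj_ll n hn]
      right; right; left
      exact ⟨rfl, rfl⟩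
    have hsw := hswap _ _ hadj
    tauto

lemma startPos_two (M : List ℕ) : startPos M 2 = 0 := by simp [startPos]

lemma startPos_zero (M : List ℕ) : startPos M 0 = gpart M 2 := by simp [startPos]

lemma startPos_one (M : List ℕ) : startPos M 1 = gpart M 2 + gpart M 0 := by simp [startPos]

lemma startPos_ge (M : List ℕ) (a : ℕ) (h : 3 ≤ a) : startPos M a = ctsum M a := by
  rw [startPos, if_neg (by omega), if_neg (by omega), if_neg (by omega)]

lemma chunk_end_le (n : ℕ) (M : List ℕ) (hsum : M.sum = 3*n-1) (i : ℕ) :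
    startPos M i + gpart M i ≤ 3*n-1 := by
  have ht3 := tsum_three M
  have h3s : ctsum M 3 ≤ 3*n-1 := by rw [← hsum]; exact sum_take_le' M 3
  have hii : ctsum M i ≤ ctsum M (i+1) := sum_take_mono' M (by omega)
  have hi1 : ctsum M (i+1) ≤ 3*n-1 := by rw [← hsum]; exact sum_take_le' M (i+1)
  have egi : gpart M i = ctsum M (i+1) - ctsum M i := rfl
  have hcase : i = 0 ∨ i = 1 ∨ i = 2 ∨ 3 ≤ i := by omega
  rcases hcase with rfl | rfl | rfl | h3
  · rw [startPos_zero]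
    have e0 : gpart M 0 = ctsum M 1 - ctsum M 0 := rfl
    omega
  · rw [startPos_one]; omega
  · rw [startPos_two]; omega
  · rw [startPos_ge M i h3]; omega

lemma chunk_start_pos (n : ℕ) (M : List ℕ) (hlen : 3 ≤ M.length)
    (hpos : ∀ x ∈ M, 0 < x) (i : ℕ) (hi2 : i ≠ 2) : 1 ≤ startPos M i := by
  have hg2 : 0 < gpart M 2 := by
    rw [gpart_eq_get M 2 (by omega)]; exact hpos _ (M.get_mem _)
  have ht3 := tsum_three M
  have hcase : i = 0 ∨ i = 1 ∨ 3 ≤ i := by omega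
  rcases hcase with rfl | rfl | h3
  · rw [startPos_zero]; omega
  · rw [startPos_one]; omega
  · rw [startPos_ge M i h3]
    have : ctsum M 3 ≤ ctsum M i := sum_take_mono' M h3
    omega

lemma chunk_sep (n : ℕ) (M : List ℕ) (i j : ℕ)
    (hb : (i = 2 ∧ j ≠ 2) ∨ (i = 0 ∧ j = 1) ∨ (i = 0 ∧ 3 ≤ j) ∨ (i = 1 ∧ 3 ≤ j) ∨
          (3 ≤ i ∧ i < j)) :
    startPos M i + gpart M i ≤ startPos M j := by
  have ht3 := tsum_three M
  rcases hb with ⟨rfl, hj2⟩ | ⟨rfl, rfl⟩ | ⟨rfl, hj3⟩ | ⟨rfl, hj3⟩ | ⟨hi3, hij⟩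
  · rw [startPos_two]
    have hcase : j = 0 ∨ j = 1 ∨ 3 ≤ j := by omega
    rcases hcase with rfl | rfl | h3
    · rw [startPos_zero]; omega
    · rw [startPos_one]; omega
    · rw [startPos_ge M j h3]
      have : ctsum M 3 ≤ ctsum M j := sum_take_mono' M h3
      omega
  · rw [startPos_zero, startPos_one]
  · rw [startPos_zero, startPos_ge M j hj3]
    have : ctsum M 3 ≤ ctsum M j := sum_take_mono' M hj3
    omega
  · rw [startPos_one, startPos_ge M j hj3]
    have : ctsum M 3 ≤ ctsum M j := sum_take_mono' M hj3
    have e1 : gpart M 1 = ctsum M 2 - ctsum M 1 := rfl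
    omega
  · rw [startPos_ge M i hi3, startPos_ge M j (by omega)]
    have h1 : ctsum M (i+1) ≤ ctsum M j := sum_take_mono' M (by omega)
    have h2 : ctsum M i ≤ ctsum M (i+1) := sum_take_mono' M (by omega)
    have egi : gpart M i = ctsum M (i+1) - ctsum M i := rfl
    omega

lemma chunk_cover (n : ℕ) (M : List ℕ) (hlen : 3 ≤ M.length) (hsum : M.sum = 3*n-1)
    (p : ℕ) (hp : p < 3*n-1) :
    ∃ i, i < M.length ∧ startPos M i ≤ p ∧ p < startPos M i + gpart M i := by
  have ht3 : (M.take 3).sum = gpart M 0 + gpart M 1 + gpart M 2 := tsum_three M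
  by_cases c2 : p < gpart M 2
  · exact ⟨2, by omega, by rw [startPos_two]; omega⟩
  by_cases c0 : p < gpart M 2 + gpart M 0
  · exact ⟨0, by omega, by rw [startPos_zero]; omega⟩
  by_cases c1 : p < gpart M 0 + gpart M 1 + gpart M 2
  · exact ⟨1, by omega, by rw [startPos_one]; omega⟩
  · have hps : p < M.sum := by omega
    obtain ⟨i, hi0, hi1, hi2, hi3⟩ :=
      exists_interval' M M.length 3 p (by omega) (by omega) hps
    refine ⟨i, hi1, ?_⟩
    rw [startPos_ge M i hi0]
    have egi : gpart M i = ctsum M (i+1) - ctsum M i := rfl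
    have h2 : ctsum M i ≤ ctsum M (i+1) := sum_take_mono' M (by omega)
    have e1 : ctsum M i = (M.take i).sum := rfl
    have e2 : ctsum M (i+1) = (M.take (i+1)).sum := rfl
    omega

set_option maxHeartbeats 2000000 in
theorem squid_nice (n : ℕ) (hn : 3 ≤ n) :
    ∀ L M : List ℕ, IsPartitionOf (3 * n - 1) L → IsPartitionOf (3 * n - 1) M →
      DominatedBy M L → HasStablePartitionOfType (squid n) L →
      HasStablePartitionOfType (squid n) M := by
  intro L M hL hM hdom hHas
  classical
  obtain ⟨B, hB⟩ := hHas
  have hLlen : 3 ≤ L.length := three_le_length n hn L B hB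
  obtain ⟨hstab, hdisjB, hcovB, hcard⟩ := hB
  have hMsum : M.sum = 3*n-1 := hM.2.2
  have hLsum : L.sum = 3*n-1 := hL.2.2
  have hL0 : L.get ⟨0, by omega⟩ ≤ 2*n-1 := by
    have h1 := hcard ⟨0, by omega⟩
    have h2 := stable_card_le n hn _ (hstab ⟨0, by omega⟩)
    omega
  have hMlen : 3 ≤ M.length := by
    by_contra h
    push_neg at h
    have h1 := hdom M.length
    rw [List.take_length] at h1
    have h2 : (L.take M.length).sum < L.sum := sum_take_lt' L hL.2.1 (by omega)
    omega
  have hM0 : gpart M 0 ≤ 2*n-1 := by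
    have h1 := hdom 1
    have eM : (M.take 1).sum = M.get ⟨0, by omega⟩ := by
      rw [List.sum_take_succ M 0 (by omega)]
      simp [List.get_eq_getElem]
    have eL : (L.take 1).sum = L.get ⟨0, by omega⟩ := by
      rw [List.sum_take_succ L 0 (by omega)]
      simp [List.get_eq_getElem]
    rw [gpart_eq_get M 0 (by omega)]
    omega
  have hgle : ∀ i, i < M.length → gpart M i ≤ gpart M 0 := by
    intro i hi
    rcases Nat.eq_zero_or_pos i with rfl | hipos
    · exact le_refl _
    · rw [gpart_eq_get M i hi, gpart_eq_get M 0 (by omega)]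
      exact hM.1.rel_get_of_lt (show (⟨0, by omega⟩ : Fin M.length) < ⟨i, hi⟩ by
        simp only [Fin.mk_lt_mk]; omega)
  have hg2 : gpart M 2 ≤ n-1 := by
    have ht3 := tsum_three M
    have h3s : ctsum M 3 ≤ 3*n-1 := by rw [← hMsum]; exact sum_take_le' M 3
    have h21 : gpart M 2 ≤ gpart M 1 := by
      rw [gpart_eq_get M 2 (by omega), gpart_eq_get M 1 (by omega)]
      exact hM.1.rel_get_of_lt (show (⟨1, by omega⟩ : Fin M.length) < ⟨2, by omega⟩ by
        simp only [Fin.mk_lt_mk]; omega)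
    have h20 : gpart M 2 ≤ gpart M 0 := hgle 2 (by omega)
    omega
  refine ⟨fun i =>
    (Finset.Ico (startPos M i.val) (startPos M i.val + gpart M i.val)).image (vmap n hn),
    ?_, ?_, ?_, ?_⟩
  · -- stability
    intro i v hv w hw hadj
    obtain ⟨p, hp, rfl⟩ := Finset.mem_image.1 hv
    obtain ⟨q, hq, rfl⟩ := Finset.mem_image.1 hw
    rw [Finset.mem_Ico] at hp hq
    have hend := chunk_end_le n M hMsum i.val
    have hgi := hgle i.val i.isLt
    have hside : 1 ≤ startPos M i.val ∨ i.val = 2 := by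
      rcases eq_or_ne i.val 2 with h | h
      · right; exact h
      · left; exact chunk_start_pos n M hMlen hM.2.1 i.val h
    have hs2 := startPos_two M
    rcases Nat.lt_trichotomy p q with hlt | heq | hgt
    · refine vmap_not_adj n hn p q hlt (by omega) (by omega) ?_ hadj
      rcases hside with h | h
      · left; omega
      · right; rw [h] at hp hq; omega
    · subst heq
      exact (squid n).loopless.irrefl _ hadj
    · refine vmap_not_adj n hn q p hgt (by omega) (by omega) ?_ hadj.symm
      rcases hside with h | h
      · left; omega
      · right; rw [h] at hp hq; omega
  · -- disjointness
    intro i j hne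
    rw [Finset.disjoint_left]
    intro x hxi hxj
    obtain ⟨p, hp, hpx⟩ := Finset.mem_image.1 hxi
    obtain ⟨q, hq, hqx⟩ := Finset.mem_image.1 hxj
    rw [Finset.mem_Ico] at hp hq
    have hendi := chunk_end_le n M hMsum i.val
    have hendj := chunk_end_le n M hMsum j.val
    have hpq : p = q := vmap_injOn n hn p q (by omega) (by omega) (hpx.trans hqx.symm)
    subst hpq
    have hvne : i.val ≠ j.val := fun h => hne (Fin.ext h)
    have htot :
        ((i.val = 2 ∧ j.val ≠ 2) ∨ (i.val = 0 ∧ j.val = 1) ∨ (i.val = 0 ∧ 3 ≤ j.val) ∨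
          (i.val = 1 ∧ 3 ≤ j.val) ∨ (3 ≤ i.val ∧ i.val < j.val)) ∨
        ((j.val = 2 ∧ i.val ≠ 2) ∨ (j.val = 0 ∧ i.val = 1) ∨ (j.val = 0 ∧ 3 ≤ i.val) ∨
          (j.val = 1 ∧ 3 ≤ i.val) ∨ (3 ≤ j.val ∧ j.val < i.val)) := by omega
    rcases htot with hb | hb
    · have := chunk_sep n M i.val j.val hb; omega
    · have := chunk_sep n M j.val i.val hb; omega
  · -- covering
    intro v
    obtain ⟨p, hp, hvp⟩ := vmap_surj n hn v
    obtain ⟨i, hilen, hi1, hi2⟩ := chunk_cover n M hMlen hMsum p (by omega)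
    exact ⟨⟨i, hilen⟩, Finset.mem_image.2 ⟨p, Finset.mem_Ico.2 ⟨hi1, hi2⟩, hvp⟩⟩
  · -- cardinalities
    intro i
    rw [Finset.card_image_of_injOn, Nat.card_Ico]
    · rw [show startPos M i.val + gpart M i.val - startPos M i.val = gpart M i.val by omega,
        gpart_eq_get M i.val i.isLt]
    · intro p hp q hq h
      rw [Finset.coe_Ico, Set.mem_Ico] at hp hq
      have hend := chunk_end_le n M hMsum i.val
      exact vmap_injOn n hn p q (by omega) (by omega) h
end
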